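/- arXiv:1907.08111 — 8 statements merged into one kernel-verified Lean document; each statement's English description precedes it below -/
import Mathlib

section
/- In any feasible non-preemptive schedule, for every job k there exists a chain to k whose value is at most the completion time C k of k; consequently, the completion time of every job k is at least the minimal chain length mc(k). -/
def IsChainTo {n : ℕ} (P : Fin n → Finset (Fin n)) (k : Fin n) (L : List (Fin n)) : Prop :=
  L ≠ [] ∧ L.getLast? = some k ∧
    (∀ h, L.head? = some h → P h = ∅) ∧
    L.Chain' (fun a b => a ∈ P b)

/-- Value of a chain: `t 1 = r j₁ + p j₁`, `t (q+1) = max (r j_{q+1}) (t q) + p j_{q+1}`. -/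
def chainValue {n : ℕ} (r p : Fin n → ℕ) : List (Fin n) → ℕ
  | [] => 0
  | j :: rest => rest.foldl (fun t j' => max (r j') t + p j') (r j + p j)

/-- Minimal chain length of job `k`: minimum value over all chains to `k`. -/
noncomputable def mc {n : ℕ} (P : Fin n → Finset (Fin n)) (r p : Fin n → ℕ) (k : Fin n) : ℕ :=
  sInf {v | ∃ L, IsChainTo P k L ∧ chainValue r p L = v}

/-- A valid non-preemptive schedule: jobs on the same machine occupy
disjoint half-open intervals `[S j, S j + p j)`. -/
def ValidSchedule {n m : ℕ} (p : Fin n → ℕ) (S : Fin n → ℕ) (M : Fin n → Fin m) : Prop :=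
  ∀ i j : Fin n, i ≠ j → M i = M j →
    ∀ t : ℕ, ¬ ((S i ≤ t ∧ t < S i + p i) ∧ (S j ≤ t ∧ t < S j + p j))

/-- Feasibility: release dates respected and each job with predecessors is
preceded by at least one of them (OR-precedence). -/
def FeasibleSchedule {n : ℕ} (P : Fin n → Finset (Fin n)) (r p S : Fin n → ℕ) : Prop :=
  (∀ j, r j ≤ S j) ∧ ∀ j, P j ≠ ∅ → ∃ i ∈ P j, S i + p i ≤ S j

def makespan {n : ℕ} (p S : Fin n → ℕ) : ℕ := Finset.univ.sup fun j => S j + p j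

/-- Non-delay: whenever some job is available but not yet started at an integer time `t`
before the makespan, all `m` machines are busy at time `t`. -/
def NonDelay {n : ℕ} (m : ℕ) (P : Fin n → Finset (Fin n)) (r p S : Fin n → ℕ) : Prop :=
  ∀ t : ℕ, t < makespan p S →
    (∃ j : Fin n, t < S j ∧ r j ≤ t ∧ (P j = ∅ ∨ ∃ i ∈ P j, S i + p i ≤ t)) →
    (Finset.univ.filter fun j' : Fin n => S j' ≤ t ∧ t < S j' + p j').card = m

/-- In any feasible non-preemptive schedule, every job `k` admits a chain to `k` of value
at most its completion time `C k = S k + p k`; consequently `mc k ≤ C k`. -/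
theorem completion_ge_minimal_chain {n m : ℕ} (hm : 1 ≤ m)
    (P : Fin n → Finset (Fin n)) (p r S : Fin n → ℕ) (M : Fin n → Fin m)
    (hp : ∀ j, 1 ≤ p j)
    (hvalid : ValidSchedule p S M)
    (hfeas : FeasibleSchedule P r p S) :
    ∀ k : Fin n,
      (∃ L : List (Fin n), IsChainTo P k L ∧ chainValue r p L ≤ S k + p k) ∧
        mc P r p k ≤ S k + p k := by
  obtain ⟨hr, hprec⟩ := hfeas
  have key : ∀ s : ℕ, ∀ k : Fin n, S k ≤ s →
      ∃ L : List (Fin n), IsChainTo P k L ∧ chainValue r p L ≤ S k + p k := by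
    intro s
    induction s using Nat.strong_induction_on with
    | _ s ih =>
      intro k hk
      by_cases hPk : P k = ∅
      · exact ⟨[k], ⟨by simp, by simp, by simp [hPk], List.isChain_singleton _⟩,
          by simpa [chainValue] using Nat.add_le_add_right (hr k) (p k)⟩
      · obtain ⟨i, hiP, hic⟩ := hprec k hPk
        have hSi : S i < s := lt_of_lt_of_le (lt_of_lt_of_le
          (Nat.lt_add_of_pos_right (hp i)) hic) hk
        obtain ⟨L, ⟨hne, hlast, hhead, hchain⟩, hval⟩ := ih (S i) hSi i le_rfl
        refine ⟨L ++ [k], ⟨by simp, by simp, ?_, ?_⟩, ?_⟩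
        · intro h hh
          apply hhead
          rw [List.head?_append_of_ne_nil L hne] at hh
          exact hh
        · simp only [List.Chain']; rw [List.isChain_append]
          refine ⟨hchain, List.isChain_singleton _, ?_⟩
          intro x hx y hy
          simp only [List.head?_cons, Option.mem_def, Option.some_inj] at hy
          rw [hlast, Option.mem_def, Option.some_inj] at hx
          subst hx; subst hy
          exact hiP
        · obtain ⟨j, rest, rfl⟩ := List.exists_cons_of_ne_nil hne
          have : chainValue r p ((j :: rest) ++ [k]) =
              max (r k) (chainValue r p (j :: rest)) + p k := by
            simp [chainValue, List.foldl_append]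
          rw [this]
          have h1 : r k ≤ S k := hr k
          have h2 : chainValue r p (j :: rest) ≤ S k :=
            le_trans hval hic
          exact Nat.add_le_add_right (max_le h1 h2) (p k)
  intro k
  obtain ⟨L, hL, hv⟩ := key (S k) k le_rfl
  refine ⟨⟨L, hL, hv⟩, ?_⟩
  exact le_trans (Nat.sInf_le ⟨L, hL, rfl⟩) hv
end

section
/- If in a feasible non-preemptive schedule the job l attains the makespan and at every integer time t < S l exactly m jobs are running (i.e., #{j : S j ≤ t < S j + p j} = m), then m times the makespan is at most ∑_j p j + (m − 1) · p l. -/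
/-!
Double counting of busy unit slots: the `m * S l` slots before `S l` are all filled by jobs
other than `l`, each contributing at most its processing time, so `m * S l + p l ≤ ∑ j, p j`.
Adding `m * p l` to both sides gives the bound, since the makespan is `S l + p l`.
-/

open Finset

def runningAt {n : ℕ} (p S : Fin n → ℕ) (t : ℕ) : Finset (Fin n) :=
  univ.filter fun j => S j ≤ t ∧ t < S j + p j

section Workload

variable {n : ℕ} (p S : Fin n → ℕ)

theorem sum_card_runningAt_range (T : ℕ) :
    ∑ t ∈ range T, #(runningAt p S t) =
      ∑ j, #((range T).filter fun t => S j ≤ t ∧ t < S j + p j) := by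
  simp only [runningAt, card_filter]
  exact sum_comm

theorem card_filter_range_running_le (T : ℕ) (j : Fin n) :
    #((range T).filter fun t => S j ≤ t ∧ t < S j + p j) ≤ p j :=
  calc _ ≤ #(Ico (S j) (S j + p j)) :=
        card_le_card fun t ht => mem_Ico.mpr (mem_filter.mp ht).2
    _ = p j := by simp

theorem sum_card_runningAt_range_add_le {T : ℕ} {l : Fin n} (hT : T ≤ S l) :
    ∑ t ∈ range T, #(runningAt p S t) + p l ≤ ∑ j, p j := by
  have hl_idle : #((range T).filter fun t => S l ≤ t ∧ t < S l + p l) = 0 := by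
    rw [card_eq_zero, filter_eq_empty_iff]
    intro t ht
    have := mem_range.mp ht
    omega
  rw [sum_card_runningAt_range, ← add_sum_erase _ _ (mem_univ l), hl_idle, zero_add,
    ← add_sum_erase _ _ (mem_univ l), add_comm]
  gcongr with j
  exact card_filter_range_running_le p S T j

end Workload

theorem makespan_bound_no_idle_general {n m : ℕ}
    (p S : Fin n → ℕ)
    (l : Fin n) (hl : S l + p l = makespan p S)
    (hbusy : ∀ t : ℕ, t < S l →
      (Finset.univ.filter fun j : Fin n => S j ≤ t ∧ t < S j + p j).card = m) :
    m * makespan p S ≤ ∑ j, p j + (m - 1) * p l := by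
  have hbusy_sum : ∑ t ∈ range (S l), #(runningAt p S t) = m * S l :=
    calc _ = ∑ _t ∈ range (S l), m := sum_congr rfl fun t ht => hbusy t (mem_range.mp ht)
      _ = m * S l := by rw [sum_const, card_range, smul_eq_mul, mul_comm]
  have hwork := sum_card_runningAt_range_add_le p S (le_refl (S l))
  have hml : m * p l ≤ (m - 1) * p l + p l := by
    rw [← Nat.succ_mul]
    exact Nat.mul_le_mul_right _ (by omega)
  rw [← hl, mul_add]
  omega

/-- If job `l` attains the makespan and at every integer time `t < S l` exactly `m` jobs
are running, then `m` times the makespan is at most `∑ p j + (m - 1) * p l`. -/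
theorem makespan_bound_no_idle {n m : ℕ} (hm : 1 ≤ m)
    (P : Fin n → Finset (Fin n)) (p r S : Fin n → ℕ) (M : Fin n → Fin m)
    (hp : ∀ j, 1 ≤ p j)
    (hvalid : ValidSchedule p S M)
    (hfeas : FeasibleSchedule P r p S)
    (l : Fin n) (hl : S l + p l = makespan p S)
    (hbusy : ∀ t : ℕ, t < S l →
      (Finset.univ.filter fun j : Fin n => S j ≤ t ∧ t < S j + p j).card = m) :
    m * makespan p S ≤ ∑ j, p j + (m - 1) * p l :=
  makespan_bound_no_idle_general p S l hl hbusy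
end

section
/- Let C be a feasible non-delay schedule such that at every integer time t less than the makespan at least one job is running, and let l be a job attaining the makespan. Then m times the makespan is at most ∑_j p j + (m − 1) · mc(l). -/
/-- For a feasible non-delay schedule in which some job runs at every integer time before
the makespan, and `l` attaining the makespan:
`m * makespan ≤ ∑ p j + (m - 1) * mc l`. -/
theorem makespan_bound_minimal_chain {n m : ℕ} (hm : 1 ≤ m)
    (P : Fin n → Finset (Fin n)) (p r S : Fin n → ℕ) (M : Fin n → Fin m)
    (hp : ∀ j, 1 ≤ p j)
    (hvalid : ValidSchedule p S M)
    (hfeas : FeasibleSchedule P r p S)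
    (hnd : NonDelay m P r p S)
    (hrun : ∀ t : ℕ, t < makespan p S → ∃ j : Fin n, S j ≤ t ∧ t < S j + p j)
    (l : Fin n) (hl : S l + p l = makespan p S) :
    m * makespan p S ≤ ∑ j, p j + (m - 1) * mc P r p l := by
  classical
  set T := makespan p S with hT
  set Busy : ℕ → Finset (Fin n) :=
    fun t => Finset.univ.filter fun j => S j ≤ t ∧ t < S j + p j with hBusy
  set B : Finset ℕ := (Finset.range T).filter (fun t => (Busy t).card < m) with hB
  have hCle : ∀ j : Fin n, S j + p j ≤ T := by
    intro j
    exact Finset.le_sup (f := fun j => S j + p j) (Finset.mem_univ j)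
  -- at most m jobs run at any time
  have hbusy_le : ∀ t, (Busy t).card ≤ m := by
    intro t
    have h : (Busy t).card ≤ (Finset.univ : Finset (Fin m)).card := by
      apply Finset.card_le_card_of_injOn M (fun a _ => Finset.mem_univ _)
      intro i hi j hj hMij
      by_contra hne
      simp only [hBusy, Finset.coe_filter, Set.mem_setOf_eq] at hi hj
      exact hvalid i j hne hMij t ⟨hi.2, hj.2⟩
    simpa using h
  -- at least one job runs before T
  have hbusy_pos : ∀ t < T, 1 ≤ (Busy t).card := by
    intro t ht
    obtain ⟨j, hj1, hj2⟩ := hrun t ht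
    refine Finset.card_pos.mpr ⟨j, ?_⟩
    simp [hBusy, hj1, hj2]
  -- non-availability at underloaded times
  have hnavail : ∀ t ∈ B, ∀ j : Fin n, t < S j → r j ≤ t →
      (P j = ∅ ∨ ∃ i ∈ P j, S i + p i ≤ t) → False := by
    intro t ht j h1 h2 h3
    simp only [hB, Finset.mem_filter, Finset.mem_range] at ht
    have := hnd t ht.1 ⟨j, h1, h2, h3⟩
    simp only [hBusy] at ht
    omega
  -- counting B below a bound
  have hcount : ∀ c : ℕ, ∀ j : Fin n,
      (∀ t ∈ B, t < S j → t < c) →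
      (B.filter (· < S j + p j)).card ≤ (B.filter (· < c)).card + p j := by
    intro c j hc
    have hsub : B.filter (· < S j + p j) ⊆
        (B.filter (· < c)) ∪ Finset.Ico (S j) (S j + p j) := by
      intro t ht
      simp only [Finset.mem_filter, Finset.mem_union, Finset.mem_Ico] at ht ⊢
      obtain ⟨htB, htlt⟩ := ht
      by_cases hs : S j ≤ t
      · exact Or.inr ⟨hs, htlt⟩
      · exact Or.inl ⟨htB, hc t htB (by omega)⟩
    calc (B.filter (· < S j + p j)).card
        ≤ ((B.filter (· < c)) ∪ Finset.Ico (S j) (S j + p j)).card :=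
          Finset.card_le_card hsub
      _ ≤ (B.filter (· < c)).card + (Finset.Ico (S j) (S j + p j)).card :=
          Finset.card_union_le _ _
      _ ≤ (B.filter (· < c)).card + p j := by rw [Nat.card_Ico]; omega
  have hrange : ∀ c : ℕ, (B.filter (· < c)).card ≤ c := by
    intro c
    have : B.filter (· < c) ⊆ Finset.range c := by
      intro t ht
      simp only [Finset.mem_filter] at ht
      exact Finset.mem_range.mpr ht.2
    simpa using Finset.card_le_card this
  -- head of chain bound
  have hhead0 : ∀ j : Fin n, P j = ∅ →
      (B.filter (· < S j + p j)).card ≤ r j + p j := by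
    intro j hPj
    have h := hcount (r j) j ?_
    · have := hrange (r j); omega
    · intro t ht hts
      by_contra hcon
      exact hnavail t ht j hts (by omega) (Or.inl hPj)
  -- step along chain
  have hstep : ∀ (j j' : Fin n), j ∈ P j' → ∀ acc : ℕ,
      (B.filter (· < S j + p j)).card ≤ acc →
      (B.filter (· < S j' + p j')).card ≤ max (r j') acc + p j' := by
    intro j j' hmem acc hacc
    have h1 := hcount (max (r j') (S j + p j)) j' ?_
    · have h2 : (B.filter (· < max (r j') (S j + p j))).card ≤ max (r j') acc := by
        rcases le_total (r j') (S j + p j) with h | h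
        · rw [max_eq_right h]
          exact le_trans hacc (le_max_right _ _)
        · rw [max_eq_left h]
          exact le_trans (hrange (r j')) (le_max_left _ _)
      omega
    · intro t ht hts
      by_contra hcon
      push_neg at hcon
      rw [max_le_iff] at hcon
      exact hnavail t ht j' hts hcon.1 (Or.inr ⟨j, hmem, hcon.2⟩)
  -- fold along a chain
  have haux : ∀ (rest : List (Fin n)), ∀ (j : Fin n) (acc : ℕ),
      (B.filter (· < S j + p j)).card ≤ acc →
      List.Chain' (fun a b => a ∈ P b) (j :: rest) →
      ∀ k : Fin n, (j :: rest).getLast? = some k →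
      (B.filter (· < S k + p k)).card ≤
        rest.foldl (fun t j' => max (r j') t + p j') acc := by
    intro rest
    induction rest with
    | nil =>
      intro j acc hacc _ k hk
      simp only [List.getLast?_singleton, Option.some.injEq] at hk
      subst hk
      simpa using hacc
    | cons j' rest' ih =>
      intro j acc hacc hchain k hk
      have hchain := List.isChain_cons_cons.mp hchain
      refine ih j' (max (r j') acc + p j') (hstep j j' hchain.1 acc hacc) hchain.2 k ?_
      rwa [List.getLast?_cons_cons] at hk
  -- every chain to l bounds B.card
  have hchainb : ∀ L : List (Fin n), IsChainTo P l L → B.card ≤ chainValue r p L := by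
    intro L hL
    obtain ⟨hne, hlast, hhead, hchain⟩ := hL
    obtain ⟨j, rest, rfl⟩ := List.exists_cons_of_ne_nil hne
    have hPj : P j = ∅ := hhead j rfl
    have h := haux rest j (r j + p j) (hhead0 j hPj) hchain l hlast
    have hBeq : B.filter (· < S l + p l) = B := by
      apply Finset.filter_true_of_mem
      intro t ht
      simp only [hB, Finset.mem_filter, Finset.mem_range] at ht
      omega
    rw [hBeq] at h
    exact h
  -- existence of a chain to any job
  have hexistN : ∀ N : ℕ, ∀ k : Fin n, S k < N → ∃ L, IsChainTo P k L := by
    intro N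
    induction N with
    | zero => intro k hk; exact absurd hk (Nat.not_lt_zero _)
    | succ N ih =>
      intro k hk
      by_cases hPk : P k = ∅
      · refine ⟨[k], ?_, by simp, ?_, List.isChain_singleton k⟩
        · simp
        · intro h hh
          simp only [List.head?_cons, Option.some.injEq] at hh
          subst hh; exact hPk
      · obtain ⟨i, hiP, hic⟩ := hfeas.2 k hPk
        have hSi : S i < N := by have := hp i; omega
        obtain ⟨L, hL⟩ := ih i hSi
        obtain ⟨hne, hlast, hhead, hchain⟩ := hL
        obtain ⟨x, L', rfl⟩ := List.exists_cons_of_ne_nil hne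
        refine ⟨(x :: L') ++ [k], by simp, List.getLast?_concat, ?_, ?_⟩
        · intro hd hh
          simp only [List.cons_append, List.head?_cons, Option.some.injEq] at hh
          exact hh ▸ hhead x rfl
        · refine List.isChain_append.mpr ?_
          refine ⟨hchain, List.isChain_singleton k, ?_⟩
          intro a ha b hb
          simp only [List.head?_cons, Option.mem_def, Option.some.injEq] at hb
          rw [Option.mem_def, hlast, Option.some.injEq] at ha
          subst ha; subst hb
          exact hiP
  obtain ⟨L0, hL0⟩ := hexistN (S l + 1) l (Nat.lt_succ_self _)
  -- B.card ≤ mc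
  have hBmc : B.card ≤ mc P r p l := by
    refine le_csInf ⟨chainValue r p L0, L0, hL0, rfl⟩ ?_
    rintro v ⟨L, hL, rfl⟩
    exact hchainb L hL
  -- total processing identity
  have hsum : ∑ t ∈ Finset.range T, (Busy t).card = ∑ j, p j := by
    have h1 : ∀ t, (Busy t).card =
        ∑ j : Fin n, if S j ≤ t ∧ t < S j + p j then 1 else 0 := by
      intro t
      simp only [hBusy, Finset.card_filter]
    calc ∑ t ∈ Finset.range T, (Busy t).card
        = ∑ t ∈ Finset.range T, ∑ j : Fin n,
            if S j ≤ t ∧ t < S j + p j then 1 else 0 := by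
          exact Finset.sum_congr rfl fun t _ => h1 t
      _ = ∑ j : Fin n, ∑ t ∈ Finset.range T,
            if S j ≤ t ∧ t < S j + p j then 1 else 0 := Finset.sum_comm
      _ = ∑ j, p j := by
          refine Finset.sum_congr rfl fun j _ => ?_
          rw [← Finset.card_filter]
          have : (Finset.range T).filter (fun t => S j ≤ t ∧ t < S j + p j)
              = Finset.Ico (S j) (S j + p j) := by
            ext t
            simp only [Finset.mem_filter, Finset.mem_range, Finset.mem_Ico]
            have := hCle j
            omega
          rw [this, Nat.card_Ico]
          omega
  -- main counting
  have hmain : m * T ≤ ∑ j, p j + (m - 1) * B.card := by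
    have h1 : m * T = ∑ t ∈ Finset.range T, (Busy t).card +
        ∑ t ∈ Finset.range T, (m - (Busy t).card) := by
      rw [← Finset.sum_add_distrib]
      have : ∀ t ∈ Finset.range T, (Busy t).card + (m - (Busy t).card) = m := by
        intro t _
        have := hbusy_le t
        omega
      rw [Finset.sum_congr rfl this, Finset.sum_const, Finset.card_range, smul_eq_mul,
        mul_comm]
    have h2 : ∑ t ∈ Finset.range T, (m - (Busy t).card) ≤ (m - 1) * B.card := by
      have hsplit := Finset.sum_filter_add_sum_filter_not (Finset.range T)
        (fun t => (Busy t).card < m) (fun t => m - (Busy t).card)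
      have hz : ∑ t ∈ (Finset.range T).filter (fun t => ¬ (Busy t).card < m),
          (m - (Busy t).card) = 0 := by
        apply Finset.sum_eq_zero
        intro t ht
        simp only [Finset.mem_filter, not_lt] at ht
        omega
      have hb : ∑ t ∈ B, (m - (Busy t).card) ≤ ∑ _t ∈ B, (m - 1) := by
        apply Finset.sum_le_sum
        intro t ht
        simp only [hB, Finset.mem_filter, Finset.mem_range] at ht
        have := hbusy_pos t ht.1
        omega
      rw [Finset.sum_const, smul_eq_mul] at hb
      calc ∑ t ∈ Finset.range T, (m - (Busy t).card)
          = ∑ t ∈ B, (m - (Busy t).card) := by rw [← hsplit, hz]; ring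
        _ ≤ B.card * (m - 1) := hb
        _ = (m - 1) * B.card := mul_comm _ _
    omega
  have hfin : (m - 1) * B.card ≤ (m - 1) * mc P r p l :=
    Nat.mul_le_mul_left _ hBmc
  omega
end

section
/- List Scheduling is a (2 − 1/m)-approximation for makespan minimization with OR-precedence constraints and release dates: if C is any feasible non-delay schedule and C* is any feasible schedule on the same instance with m machines, then m times the makespan of C is at most (2m − 1) times the makespan of C*. -/
/-!
Count machine-time slots over `[0, C)`, `C` the makespan of the non-delay schedule `S`:
`m * C = ∑ p + ∑ₜ (m - #running t)`. A time at which no job runs loses `m` slots, a time at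
which some machine is free at most `m - 1`.

At a non-full time, non-delay means every job that starts later is unreleased or waits for all
its OR-predecessors. Walking back from the last job, each time to a predecessor that the other
schedule `S'` completes before its successor starts, shows that there are at most `C*`
non-full times.

At the last idle time `t₀`, the jobs not yet started in `S` form a set that `S'` cannot start
by `t₀` either, so their work fits into `[t₀ + 1, C*)`, while the earlier jobs fill the
non-idle part of `[0, t₀]`. Hence `∑ p + m * #idle ≤ m * C*`, and altogether
`m * C ≤ m * C* + (m - 1) * C*`.
-/

namespace ListScheduling

open Finset

variable {n m : ℕ}

def numRunning (p S : Fin n → ℕ) (Q : Finset (Fin n)) (t : ℕ) : ℕ :=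
  #{j ∈ Q | S j ≤ t ∧ t < S j + p j}

def idleTimes (p S : Fin n → ℕ) (T : ℕ) : Finset ℕ :=
  {t ∈ range T | numRunning p S univ t = 0}

def nonFullTimes (m : ℕ) (p S : Fin n → ℕ) (T : ℕ) : Finset ℕ :=
  {t ∈ range T | numRunning p S univ t < m}

section Counting

variable {p S : Fin n → ℕ}

theorem numRunning_le {M : Fin n → Fin m} (hvalid : ValidSchedule p S M) (Q : Finset (Fin n))
    (t : ℕ) : numRunning p S Q t ≤ m := by
  refine (card_le_card_of_injOn M (fun _ _ => mem_coe.2 (mem_univ _)) ?_).trans_eq (card_fin m)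
  intro i hi j hj hij
  by_contra hne
  exact hvalid i j hne hij t ⟨(mem_filter.1 hi).2, (mem_filter.1 hj).2⟩

theorem numRunning_mono {Q Q' : Finset (Fin n)} (h : Q ⊆ Q') (t : ℕ) :
    numRunning p S Q t ≤ numRunning p S Q' t :=
  card_le_card (filter_subset_filter _ h)

theorem numRunning_eq_zero_iff {Q : Finset (Fin n)} {t : ℕ} :
    numRunning p S Q t = 0 ↔ ∀ j ∈ Q, ¬(S j ≤ t ∧ t < S j + p j) := by
  rw [numRunning, card_eq_zero, filter_eq_empty_iff]

theorem sum_numRunning_Ico {Q : Finset (Fin n)} {a b : ℕ}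
    (h : ∀ j ∈ Q, a ≤ S j ∧ S j + p j ≤ b) :
    ∑ t ∈ Ico a b, numRunning p S Q t = ∑ j ∈ Q, p j := by
  have hcount := sum_card_bipartiteAbove_eq_sum_card_bipartiteBelow
    (s := Q) (t := Ico a b) (r := fun j t => S j ≤ t ∧ t < S j + p j)
  refine hcount.symm.trans (sum_congr rfl fun j hj => ?_)
  have hwin : (Ico a b).bipartiteAbove (fun j t => S j ≤ t ∧ t < S j + p j) j
      = Ico (S j) (S j + p j) := by
    ext t
    simp only [bipartiteAbove, mem_filter, mem_Ico]
    have := h j hj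
    omega
  rw [hwin, Nat.card_Ico, Nat.add_sub_cancel_left]

theorem sum_le_mul_of_mem_Ico {M : Fin n → Fin m} (hvalid : ValidSchedule p S M)
    {Q : Finset (Fin n)} {a b : ℕ} (h : ∀ j ∈ Q, a ≤ S j ∧ S j + p j ≤ b) :
    ∑ j ∈ Q, p j ≤ m * (b - a) := by
  rw [← sum_numRunning_Ico h, mul_comm, ← Nat.card_Ico a b, ← smul_eq_mul, ← sum_const]
  exact sum_le_sum fun t _ => numRunning_le hvalid Q t

theorem le_makespan (j : Fin n) : S j + p j ≤ makespan p S :=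
  le_sup (f := fun j => S j + p j) (mem_univ j)

/-- Each time unit contributes `m` idle machine slots if no job runs, and at most `m - 1` if
some but not all machines are busy. -/
theorem mul_makespan_le :
    m * makespan p S ≤ ∑ j, p j + m * #(idleTimes p S (makespan p S))
      + (m - 1) * #(nonFullTimes m p S (makespan p S)) := by
  rw [← sum_numRunning_Ico (p := p) (S := S) (Q := univ) (a := 0) (b := makespan p S)
      fun j _ => ⟨Nat.zero_le _, le_makespan j⟩, idleTimes, nonFullTimes, card_filter,
    card_filter, mul_sum, mul_sum, range_eq_Ico, ← sum_add_distrib, ← sum_add_distrib]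
  calc m * makespan p S = ∑ _t ∈ Ico 0 (makespan p S), m := by
        rw [sum_const, Nat.card_Ico, smul_eq_mul, mul_comm, Nat.sub_zero]
    _ ≤ _ := sum_le_sum fun t _ => by split_ifs <;> omega

end Counting

section NonDelay

variable {P : Fin n → Finset (Fin n)} {p r S S' : Fin n → ℕ}

theorem not_available_of_numRunning_lt (hnd : NonDelay m P r p S) {t : ℕ}
    (ht : numRunning p S univ t < m) {j : Fin n} (hj : t < S j) :
    t < r j ∨ (P j ≠ ∅ ∧ ∀ i ∈ P j, t < S i + p i) := by
  by_contra! hav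
  have hmk : t < makespan p S := hj.trans_le ((Nat.le_add_right _ _).trans (le_makespan j))
  refine ht.ne (hnd t hmk ⟨j, hj, hav.1, ?_⟩)
  by_cases hP : P j = ∅
  · exact Or.inl hP
  · obtain ⟨i, hi, hle⟩ := hav.2 (nonempty_iff_ne_empty.2 hP)
    exact Or.inr ⟨i, hi, hle⟩

/-- Let `i` be the OR-predecessor that `S'` completes before starting `j`: every non-full time
before `S j + p j` is spent waiting for `r j`, before `i` completes in `S`, or running `j`. -/
theorem card_nonFullTimes_le (hp : ∀ j, 1 ≤ p j) (hnd : NonDelay m P r p S)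
    (hfeas' : FeasibleSchedule P r p S') (j : Fin n) :
    #(nonFullTimes m p S (S j + p j)) ≤ S' j + p j := by
  induction hs : S' j using Nat.strong_induction_on generalizing j with
  | _ s ih =>
  subst hs
  have hr := hfeas'.1 j
  by_cases hP : P j = ∅
  · have hsub : nonFullTimes m p S (S j + p j) ⊆ range (r j) ∪ Ico (S j) (S j + p j) := by
      intro t ht
      simp only [nonFullTimes, mem_filter, mem_range] at ht
      simp only [mem_union, mem_range, mem_Ico]
      rcases le_or_gt (S j) t with h | h
      · exact Or.inr ⟨h, ht.1⟩
      · exact Or.inl ((not_available_of_numRunning_lt hnd ht.2 h).resolve_right fun h' => h'.1 hP)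
    have := (card_le_card hsub).trans (card_union_le _ _)
    simp only [card_range, Nat.card_Ico] at this
    omega
  · obtain ⟨i, hi, hiS'⟩ := hfeas'.2 j hP
    have hsub : nonFullTimes m p S (S j + p j) ⊆
        (nonFullTimes m p S (S i + p i) ∪ Ico (S i + p i) (r j)) ∪ Ico (S j) (S j + p j) := by
      intro t ht
      simp only [nonFullTimes, mem_filter, mem_range] at ht
      simp only [nonFullTimes, mem_union, mem_filter, mem_range, mem_Ico]
      rcases le_or_gt (S j) t with h | h
      · exact Or.inr ⟨h, ht.1⟩
      rcases not_available_of_numRunning_lt hnd ht.2 h with h' | h'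
      · rcases lt_or_ge t (S i + p i) with h'' | h''
        · exact Or.inl (Or.inl ⟨h'', ht.2⟩)
        · exact Or.inl (Or.inr ⟨h'', h'⟩)
      · exact Or.inl (Or.inl ⟨h'.2 i hi, ht.2⟩)
    have hIH := ih (S' i) (by have := hp i; omega) i rfl
    have hbound : #(nonFullTimes m p S (S i + p i)) ≤ S i + p i :=
      (card_filter_le _ _).trans_eq (card_range _)
    have := (card_le_card hsub).trans
      ((card_union_le _ _).trans (Nat.add_le_add_right (card_union_le _ _) _))
    simp only [Nat.card_Ico] at this
    omega

/-- The jobs that `S` has not started yet at an idle time contain, with each job, the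
OR-predecessor that `S'` completes before starting it, so `S'` cannot start them earlier. -/
theorem lt_start_of_numRunning_eq_zero (hm : 0 < m) (hp : ∀ j, 1 ≤ p j)
    (hnd : NonDelay m P r p S) (hfeas' : FeasibleSchedule P r p S') {t : ℕ}
    (ht : numRunning p S univ t = 0) (j : Fin n) (hj : t < S j) : t < S' j := by
  induction hs : S' j using Nat.strong_induction_on generalizing j with
  | _ s ih =>
  subst hs
  rcases not_available_of_numRunning_lt hnd (ht ▸ hm) hj with h | ⟨hP, hpred⟩
  · exact h.trans_le (hfeas'.1 j)
  · obtain ⟨i, hi, hiS'⟩ := hfeas'.2 j hP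
    have hSi : t < S i := by
      have := numRunning_eq_zero_iff.1 ht i (mem_univ i)
      have := hpred i hi
      omega
    have := ih (S' i) (by have := hp i; omega) i hSi rfl
    have := hp i
    omega

theorem sum_add_mul_card_idleTimes_le_of_idle {M M' : Fin n → Fin m} (hm : 0 < m)
    (hp : ∀ j, 1 ≤ p j) (hvalid : ValidSchedule p S M) (hnd : NonDelay m P r p S)
    (hvalid' : ValidSchedule p S' M') (hfeas' : FeasibleSchedule P r p S') {t₀ : ℕ}
    (ht₀ : numRunning p S univ t₀ = 0) (ht₀C : t₀ < makespan p S) :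
    ∑ j, p j + m * #(idleTimes p S (t₀ + 1)) ≤ m * makespan p S' := by
  have hidle := numRunning_eq_zero_iff.1 ht₀
  have hlate := lt_start_of_numRunning_eq_zero hm hp hnd hfeas' ht₀
  have hlate_work : ∑ j ∈ univ with t₀ < S j, p j ≤ m * (makespan p S' - (t₀ + 1)) :=
    sum_le_mul_of_mem_Ico hvalid' fun j hj => ⟨hlate j (mem_filter.1 hj).2, le_makespan j⟩
  have hearly_work : ∑ j ∈ univ with ¬t₀ < S j, p j + m * #(idleTimes p S (t₀ + 1))
      ≤ m * (t₀ + 1) := by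
    have hwin : ∀ j ∈ univ.filter (¬t₀ < S ·), 0 ≤ S j ∧ S j + p j ≤ t₀ + 1 := by
      intro j hj
      have := hidle j (mem_univ j)
      have := (mem_filter.1 hj).2
      omega
    rw [← sum_numRunning_Ico hwin, idleTimes, card_filter, mul_sum, range_eq_Ico,
      ← sum_add_distrib]
    calc _ ≤ ∑ _t ∈ Ico 0 (t₀ + 1), m := sum_le_sum fun t _ => ?_
      _ = m * (t₀ + 1) := by rw [sum_const, Nat.card_Ico, smul_eq_mul, mul_comm, Nat.sub_zero]
    have hsub := numRunning_mono (p := p) (S := S) (filter_subset (fun j => ¬t₀ < S j) univ) t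
    have hle := numRunning_le hvalid univ t
    split_ifs <;> omega
  have ht₀C' : t₀ + 1 ≤ makespan p S' := by
    obtain ⟨j, -, hj⟩ := Finset.lt_sup_iff.1 ht₀C
    have := hidle j (mem_univ j)
    have := hlate j (by omega)
    have := le_makespan (p := p) (S := S') j
    omega
  have hsplit := sum_filter_add_sum_filter_not univ (fun j => t₀ < S j) p
  have hmul : m * (makespan p S' - (t₀ + 1)) + m * (t₀ + 1) = m * makespan p S' := by
    rw [← mul_add, Nat.sub_add_cancel ht₀C']
  omega

theorem sum_add_mul_card_idleTimes_le {M M' : Fin n → Fin m} (hm : 0 < m)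
    (hp : ∀ j, 1 ≤ p j) (hvalid : ValidSchedule p S M) (hnd : NonDelay m P r p S)
    (hvalid' : ValidSchedule p S' M') (hfeas' : FeasibleSchedule P r p S') :
    ∑ j, p j + m * #(idleTimes p S (makespan p S)) ≤ m * makespan p S' := by
  rcases (idleTimes p S (makespan p S)).eq_empty_or_nonempty with hZ | hZ
  · rw [hZ, card_empty, mul_zero, add_zero]
    simpa using sum_le_mul_of_mem_Ico hvalid' (Q := univ) (a := 0)
      fun j _ => ⟨Nat.zero_le _, le_makespan j⟩
  set t₀ := (idleTimes p S (makespan p S)).max' hZ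
  obtain ⟨ht₀C, ht₀⟩ := mem_filter.1 (max'_mem _ hZ)
  have hsub : idleTimes p S (makespan p S) ⊆ idleTimes p S (t₀ + 1) := fun t ht =>
    mem_filter.2 ⟨mem_range.2 (Nat.lt_succ_of_le (le_max' _ t ht)), (mem_filter.1 ht).2⟩
  calc _ ≤ ∑ j, p j + m * #(idleTimes p S (t₀ + 1)) := by gcongr
    _ ≤ _ := sum_add_mul_card_idleTimes_le_of_idle hm hp hvalid hnd hvalid' hfeas' ht₀
        (mem_range.1 ht₀C)

theorem card_nonFullTimes_makespan_le (hp : ∀ j, 1 ≤ p j) (hnd : NonDelay m P r p S)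
    (hfeas' : FeasibleSchedule P r p S') :
    #(nonFullTimes m p S (makespan p S)) ≤ makespan p S' := by
  rcases Nat.eq_zero_or_pos (makespan p S) with h0 | hpos
  · simp [h0, nonFullTimes]
  obtain ⟨j, -, -⟩ := Finset.lt_sup_iff.1 hpos
  obtain ⟨k, -, hk⟩ := exists_mem_eq_sup univ ⟨j, mem_univ j⟩ fun j => S j + p j
  rw [show makespan p S = S k + p k from hk]
  exact (card_nonFullTimes_le hp hnd hfeas' k).trans (le_makespan k)

end NonDelay

end ListScheduling

open Finset ListScheduling

theorem list_scheduling_two_approx_general {n m : ℕ} (hm : 1 ≤ m)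
    (P : Fin n → Finset (Fin n)) (p r : Fin n → ℕ)
    (hp : ∀ j, 1 ≤ p j)
    (S : Fin n → ℕ) (M : Fin n → Fin m)
    (hvalid : ValidSchedule p S M)
    (hnd : NonDelay m P r p S)
    (S' : Fin n → ℕ) (M' : Fin n → Fin m)
    (hvalid' : ValidSchedule p S' M')
    (hfeas' : FeasibleSchedule P r p S') :
    m * makespan p S ≤ (2 * m - 1) * makespan p S' := by
  have hidle := sum_add_mul_card_idleTimes_le hm hp hvalid hnd hvalid' hfeas'
  have hnonFull := Nat.mul_le_mul_left (m - 1) (card_nonFullTimes_makespan_le hp hnd hfeas')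
  calc m * makespan p S
      ≤ ∑ j, p j + m * #(idleTimes p S (makespan p S))
        + (m - 1) * #(nonFullTimes m p S (makespan p S)) := mul_makespan_le
    _ ≤ (m + (m - 1)) * makespan p S' := by rw [add_mul]; omega
    _ = (2 * m - 1) * makespan p S' := by rw [show m + (m - 1) = 2 * m - 1 by omega]

/-- List Scheduling is a `(2 - 1/m)`-approximation: for any feasible non-delay schedule
`S` and any feasible schedule `S'` on the same instance with `m` machines,
`m * makespan S ≤ (2m - 1) * makespan S'`. -/
theorem list_scheduling_two_approx {n m : ℕ} (hm : 1 ≤ m)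
    (P : Fin n → Finset (Fin n)) (p r : Fin n → ℕ)
    (hp : ∀ j, 1 ≤ p j)
    (S : Fin n → ℕ) (M : Fin n → Fin m)
    (hvalid : ValidSchedule p S M)
    (hfeas : FeasibleSchedule P r p S)
    (hnd : NonDelay m P r p S)
    (S' : Fin n → ℕ) (M' : Fin n → Fin m)
    (hvalid' : ValidSchedule p S' M')
    (hfeas' : FeasibleSchedule P r p S') :
    m * makespan p S ≤ (2 * m - 1) * makespan p S' :=
  list_scheduling_two_approx_general hm P p r hp S M hvalid hnd S' M' hvalid' hfeas'
end

section
/- On a single machine (m = 1), every feasible non-delay schedule is optimal: its makespan is at most the makespan of every feasible schedule of the same instance. -/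
/-- The intervals `[f j, f j + p j)` of pairwise disjoint jobs, as a `biUnion`. -/
lemma card_biUnion_intervals {n : ℕ} (p f : Fin n → ℕ) (T : Finset (Fin n))
    (hdisj : ∀ i ∈ T, ∀ j ∈ T, i ≠ j →
      ∀ t : ℕ, ¬ ((f i ≤ t ∧ t < f i + p i) ∧ (f j ≤ t ∧ t < f j + p j))) :
    (T.biUnion fun j => Finset.Ico (f j) (f j + p j)).card = ∑ j ∈ T, p j := by
  rw [Finset.card_biUnion]
  · apply Finset.sum_congr rfl
    intro j _
    simp [Nat.card_Ico]
  · intro i hi j hj hij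
    rw [Function.onFun, Finset.disjoint_left]
    intro t ht ht'
    simp only [Finset.mem_Ico] at ht ht'
    exact hdisj i hi j hj hij t ⟨ht, ht'⟩

lemma sum_p_le_of_disjoint {n : ℕ} (p f : Fin n → ℕ) (T : Finset (Fin n))
    (hdisj : ∀ i ∈ T, ∀ j ∈ T, i ≠ j →
      ∀ t : ℕ, ¬ ((f i ≤ t ∧ t < f i + p i) ∧ (f j ≤ t ∧ t < f j + p j)))
    (a b : ℕ) (hsub : ∀ j ∈ T, a ≤ f j ∧ f j + p j ≤ b) :
    ∑ j ∈ T, p j ≤ b - a := by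
  have hcard := card_biUnion_intervals p f T hdisj
  have hsub' : (T.biUnion fun j => Finset.Ico (f j) (f j + p j)) ⊆ Finset.Ico a b := by
    intro t ht
    simp only [Finset.mem_biUnion, Finset.mem_Ico] at ht ⊢
    obtain ⟨j, hj, h1, h2⟩ := ht
    exact ⟨le_trans (hsub j hj).1 h1, lt_of_lt_of_le h2 (hsub j hj).2⟩
  have := Finset.card_le_card hsub'
  rw [hcard, Nat.card_Ico] at this
  exact this

/-- On a single machine (`m = 1`), every feasible non-delay schedule is optimal. -/
theorem single_machine_nondelay_optimal {n : ℕ}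
    (P : Fin n → Finset (Fin n)) (p r : Fin n → ℕ)
    (hp : ∀ j, 1 ≤ p j)
    (S : Fin n → ℕ) (M : Fin n → Fin 1)
    (hvalid : ValidSchedule p S M)
    (hfeas : FeasibleSchedule P r p S)
    (hnd : NonDelay 1 P r p S)
    (S' : Fin n → ℕ) (M' : Fin n → Fin 1)
    (hvalid' : ValidSchedule p S' M')
    (hfeas' : FeasibleSchedule P r p S') :
    makespan p S ≤ makespan p S' := by
  classical
  set Cmax := makespan p S with hCdef
  by_cases hn0 : Cmax = 0
  · omega
  have hCpos : 0 < Cmax := Nat.pos_of_ne_zero hn0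
  -- a job achieving the makespan
  have hne : (Finset.univ : Finset (Fin n)).Nonempty := by
    rcases (Finset.univ : Finset (Fin n)).eq_empty_or_nonempty with h | h
    · exfalso; apply hn0; rw [hCdef]; unfold makespan; rw [h]; simp
    · exact h
  obtain ⟨jm, -, hjm⟩ := Finset.exists_mem_eq_sup Finset.univ hne (fun j => S j + p j)
  have hjm' : Cmax = S jm + p jm := hjm
  -- the start of the final busy block
  set U : Set ℕ := {v | ∀ t, v ≤ t → t < Cmax → ∃ j, S j ≤ t ∧ t < S j + p j} with hUdef
  have hCU : Cmax ∈ U := fun t ht ht' => absurd ht' (not_lt.mpr ht)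
  set u := sInf U with hudef
  have huU : u ∈ U := Nat.sInf_mem ⟨Cmax, hCU⟩
  have hC1U : Cmax - 1 ∈ U := by
    intro t ht ht'
    have htc : t = Cmax - 1 := by omega
    subst htc
    exact ⟨jm, by have := hp jm; omega, by omega⟩
  have hult : u < Cmax := lt_of_le_of_lt (Nat.sInf_le hC1U) (by omega)
  -- idle at u - 1 when u > 0
  have hidle : u ≠ 0 → ∀ j, ¬ (S j ≤ u - 1 ∧ u - 1 < S j + p j) := by
    intro hu0
    have h1 : u - 1 ∉ U := Nat.notMem_of_lt_sInf (by omega)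
    have h2 : ¬ ∀ t, u - 1 ≤ t → t < Cmax → ∃ j, S j ≤ t ∧ t < S j + p j := h1
    push_neg at h2
    obtain ⟨t, ht1, ht2, ht3⟩ := h2
    have htu : t = u - 1 := by
      by_contra hne'
      have hut : u ≤ t := by omega
      obtain ⟨j, hj1, hj2⟩ := huU t hut ht2
      exact absurd hj2 (not_lt.mpr (ht3 j hj1))
    subst htu
    intro j hj
    exact absurd hj.2 (not_lt.mpr (ht3 j hj.1))
  -- any job running at a time ≥ u starts at ≥ u
  have hjT : ∀ (j : Fin n) (t : ℕ), u ≤ t → S j ≤ t → t < S j + p j → u ≤ S j := by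
    intro j t h1 h2 h3
    rcases Nat.eq_zero_or_pos u with h | h
    · omega
    · by_contra hc
      exact hidle (by omega) j ⟨by omega, by omega⟩
  set T : Finset (Fin n) := Finset.univ.filter (fun j => u ≤ S j) with hTdef
  have hMall : ∀ i j : Fin n, M i = M j := fun i j => Subsingleton.elim _ _
  have hM'all : ∀ i j : Fin n, M' i = M' j := fun i j => Subsingleton.elim _ _
  have hdisjS : ∀ i ∈ T, ∀ j ∈ T, i ≠ j →
      ∀ t : ℕ, ¬ ((S i ≤ t ∧ t < S i + p i) ∧ (S j ≤ t ∧ t < S j + p j)) :=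
    fun i _ j _ hij => hvalid i j hij (hMall i j)
  have hdisjS' : ∀ i ∈ T, ∀ j ∈ T, i ≠ j →
      ∀ t : ℕ, ¬ ((S' i ≤ t ∧ t < S' i + p i) ∧ (S' j ≤ t ∧ t < S' j + p j)) :=
    fun i _ j _ hij => hvalid' i j hij (hM'all i j)
  -- the busy block exactly covers [u, Cmax)
  have hUnion : (T.biUnion fun j => Finset.Ico (S j) (S j + p j)) = Finset.Ico u Cmax := by
    ext t
    simp only [Finset.mem_biUnion, Finset.mem_Ico, hTdef, Finset.mem_filter,
      Finset.mem_univ, true_and]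
    constructor
    · rintro ⟨j, hjS, h1, h2⟩
      refine ⟨le_trans hjS h1, lt_of_lt_of_le h2 ?_⟩
      exact Finset.le_sup (f := fun j => S j + p j) (Finset.mem_univ j)
    · rintro ⟨h1, h2⟩
      obtain ⟨j, hj1, hj2⟩ := huU t h1 h2
      exact ⟨j, hjT j t h1 hj1 hj2, hj1, hj2⟩
  have hsum : ∑ j ∈ T, p j = Cmax - u := by
    have h := card_biUnion_intervals p S T hdisjS
    rw [hUnion, Nat.card_Ico] at h
    omega
  -- T is nonempty
  have hTne : T.Nonempty := by
    rw [Finset.nonempty_iff_ne_empty]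
    intro h
    rw [h, Finset.sum_empty] at hsum
    omega
  -- minimal S'-start in T
  obtain ⟨js, hjsT, hjsmin⟩ := Finset.exists_min_image T S' hTne
  have hjsS : u ≤ S js := by
    have := hjsT
    rw [hTdef, Finset.mem_filter] at this
    exact this.2
  -- every predecessor forced past u is in T (when u > 0)
  -- key claim: u ≤ S' js
  have hkey : u ≤ S' js := by
    rcases Nat.eq_zero_or_pos u with h | hupos
    · omega
    -- at time u - 1, machine idle, so no job available
    have hcard0 : (Finset.univ.filter fun j' : Fin n =>
        S j' ≤ u - 1 ∧ u - 1 < S j' + p j').card = 0 := by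
      rw [Finset.card_eq_zero, Finset.filter_eq_empty_iff]
      intro j _
      exact hidle (by omega) j
    have hnav : ¬ ∃ j : Fin n, u - 1 < S j ∧ r j ≤ u - 1 ∧
        (P j = ∅ ∨ ∃ i ∈ P j, S i + p i ≤ u - 1) := by
      intro h
      have := hnd (u - 1) (by omega) h
      rw [hcard0] at this
      exact absurd this (by omega)
    push_neg at hnav
    have h1 : u - 1 < S js := by omega
    by_cases hr : r js ≤ u - 1
    · -- then P js ≠ ∅ and no predecessor finishes by u - 1
      have h2 := hnav js h1 hr
      obtain ⟨hPne, hPlate⟩ := h2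
      obtain ⟨i, hiP, hiC⟩ := hfeas'.2 js hPne.ne_empty
      have hiu : u ≤ S i := by
        by_contra hc
        exact hidle (by omega) i ⟨by omega, by have := hPlate i hiP; omega⟩
      have hiT : i ∈ T := by
        rw [hTdef, Finset.mem_filter]
        exact ⟨Finset.mem_univ i, hiu⟩
      have := hjsmin i hiT
      have := hp i
      omega
    · have := hfeas'.1 js
      omega
  have hallT : ∀ j ∈ T, u ≤ S' j ∧ S' j + p j ≤ makespan p S' := by
    intro j hjT'
    constructor
    · exact le_trans hkey (hjsmin j hjT')
    · exact Finset.le_sup (f := fun j => S' j + p j) (Finset.mem_univ j)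
  have hub := sum_p_le_of_disjoint p S' T hdisjS' u (makespan p S') hallT
  have hule : u ≤ makespan p S' := by
    have h1 := (hallT js hjsT).1
    have h2 := (hallT js hjsT).2
    have := hp js
    omega
  omega
end

section
/- Reduction of OR-precedence to an outforest: let all processing times equal 1, suppose at least one feasible unit schedule for m machines exists, let (L_j) be a closed collection of minimal chains, and define modified predecessor sets P' by P' j = {the predecessor of j in L_j} if P j ≠ ∅ and P' j = ∅ otherwise. Then the minimum makespan over unit schedules feasible with respect to P' equals the minimum makespan over unit schedules feasible with respect to P. -/
/-- Feasible unit schedule w.r.t. predecessor sets `Q`: each job `j` occupies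
slot `[C j - 1, C j)`; at most `m` jobs per slot; release dates respected;
each job with predecessors is preceded by one of them. -/
def FeasibleUnit {n : ℕ} (m : ℕ) (Q : Fin n → Finset (Fin n)) (r C : Fin n → ℕ) : Prop :=
  (∀ j, 1 ≤ C j) ∧
    (∀ t : ℕ, (Finset.univ.filter fun j : Fin n => C j = t).card ≤ m) ∧
    (∀ j, r j + 1 ≤ C j) ∧
    ∀ j, Q j ≠ ∅ → ∃ i ∈ Q j, C i < C j

def makespanU {n : ℕ} (C : Fin n → ℕ) : ℕ := Finset.univ.sup C

/-- A closed collection of minimal chains (for unit processing times):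
`L j` is a chain to `j` of value `mc j`, and if `i` occurs in `L j` then
`L i` is a prefix of `L j` (necessarily the prefix ending at `i`). -/
def ClosedCollection {n : ℕ} (P : Fin n → Finset (Fin n)) (r : Fin n → ℕ)
    (L : Fin n → List (Fin n)) : Prop :=
  ∀ j, IsChainTo P j (L j) ∧ chainValue r (fun _ => 1) (L j) = mc P r (fun _ => 1) j ∧
    ∀ i ∈ L j, L i <+: L j

/-- Number of inverted pairs `(i, j)`: `i` occurs in `L j`, `i ≠ j`, and `C i ≥ C j`. -/
def inversions {n : ℕ} (L : Fin n → List (Fin n)) (C : Fin n → ℕ) : ℕ :=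
  (Finset.univ.filter fun q : Fin n × Fin n =>
    q.1 ∈ L q.2 ∧ q.1 ≠ q.2 ∧ C q.2 ≤ C q.1).card

section AuxLemmas

open Finset

variable {n : ℕ}

lemma chainValue_concat (r p : Fin n → ℕ) (M : List (Fin n)) (hM : M ≠ []) (k : Fin n) :
    chainValue r p (M ++ [k]) = max (r k) (chainValue r p M) + p k := by
  cases M with
  | nil => exact absurd rfl hM
  | cons a rest =>
    simp only [chainValue, List.cons_append, List.foldl_append, List.foldl_cons,
      List.foldl_nil]

lemma chainValue_last_ge (r p : Fin n → ℕ) {L : List (Fin n)} {j : Fin n}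
    (hlast : L.getLast? = some j) : r j + p j ≤ chainValue r p L := by
  have hdecomp : L.dropLast ++ [j] = L :=
    List.dropLast_append_getLast? j (by rw [hlast]; rfl)
  rcases h : L.dropLast with _ | ⟨a, rest⟩
  · rw [h] at hdecomp
    rw [← hdecomp]
    simp [chainValue]
  · rw [h] at hdecomp
    rw [← hdecomp, chainValue_concat r p _ (by simp) j]
    omega

lemma isChainTo_concat {P : Fin n → Finset (Fin n)} {i j : Fin n} {M : List (Fin n)}
    (h : IsChainTo P i M) (hij : i ∈ P j) : IsChainTo P j (M ++ [j]) := by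
  obtain ⟨hne, hlast, hhead, hchain⟩ := h
  refine ⟨by simp, by simp, ?_, ?_⟩
  · intro x hx
    rw [List.head?_append_of_ne_nil _ hne] at hx
    exact hhead x hx
  · unfold List.Chain'; rw [List.isChain_append]
    refine ⟨hchain, List.isChain_singleton _, ?_⟩
    intro x hx y hy
    rw [hlast] at hx
    simp only [Option.mem_def, Option.some.injEq] at hx
    simp only [List.head?_cons, Option.mem_def, Option.some.injEq] at hy
    exact hx ▸ hy ▸ hij

lemma mc_le_chainValue (P : Fin n → Finset (Fin n)) (r p : Fin n → ℕ) {k : Fin n}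
    {M : List (Fin n)} (h : IsChainTo P k M) : mc P r p k ≤ chainValue r p M :=
  Nat.sInf_le ⟨M, h, rfl⟩

lemma isChainTo_singleton {P : Fin n → Finset (Fin n)} {j : Fin n} (h : P j = ∅) :
    IsChainTo P j [j] := by
  refine ⟨by simp, by simp, ?_, List.isChain_singleton _⟩
  intro x hx
  simp only [List.head?_cons, Option.some.injEq] at hx
  exact hx ▸ h

/-- Lower bound: in any feasible schedule w.r.t. `P`, each job completes no
earlier than its minimal chain value. -/
lemma mc_le_of_feasible {m : ℕ} {P : Fin n → Finset (Fin n)} {r C : Fin n → ℕ}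
    (hC : FeasibleUnit m P r C) {L : Fin n → List (Fin n)} (hL : ClosedCollection P r L) :
    ∀ j, mc P r (fun _ => 1) j ≤ C j := by
  obtain ⟨h1, _, hr, hprec⟩ := hC
  have key : ∀ v (j : Fin n), C j ≤ v → mc P r (fun _ => 1) j ≤ C j := by
    intro v
    induction v with
    | zero => intro j hj; exact absurd (le_trans (h1 j) hj) (by omega)
    | succ v ihv =>
      intro j hj
      by_cases hP : P j = ∅
      · have hle : mc P r (fun _ => 1) j ≤ r j + 1 :=
          mc_le_chainValue P r _ (isChainTo_singleton hP)
        exact le_trans hle (hr j)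
      · obtain ⟨i, hiP, hiC⟩ := hprec j hP
        have hmi : mc P r (fun _ => 1) i ≤ C i := ihv i (by omega)
        obtain ⟨hchi, hvali, _⟩ := hL i
        have hch : IsChainTo P j (L i ++ [j]) := isChainTo_concat hchi hiP
        have hval : chainValue r (fun _ => 1) (L i ++ [j])
            = max (r j) (mc P r (fun _ => 1) i) + 1 := by
          rw [chainValue_concat r _ (L i) hchi.1 j, hvali]
        have hle : mc P r (fun _ => 1) j ≤ max (r j) (mc P r (fun _ => 1) i) + 1 := by
          have := mc_le_chainValue P r (p := fun _ => 1) hch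
          rw [hval] at this
          exact this
        have h1' : r j + 1 ≤ C j := hr j
        have h2' : mc P r (fun _ => 1) i < C j := lt_of_le_of_lt hmi hiC
        have : max (r j) (mc P r (fun _ => 1) i) + 1 ≤ C j := by
          rcases max_choice (r j) (mc P r (fun _ => 1) i) with he | he <;> rw [he] <;> omega
        omega
  intro j
  exact key (C j) j le_rfl

/-- Select up to `m` elements of largest weight. -/
lemma exists_select (m : ℕ) (f : Fin n → ℕ) :
    ∀ A : Finset (Fin n), ∃ S : Finset (Fin n), S ⊆ A ∧ S.card = min m A.card ∧
      ∀ x ∈ A, x ∉ S → ∀ y ∈ S, f x ≤ f y := by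
  induction m with
  | zero =>
    intro A
    exact ⟨∅, empty_subset _, by simp, by simp⟩
  | succ m ih =>
    intro A
    rcases eq_empty_or_nonempty A with hA | hA
    · exact ⟨∅, empty_subset _, by simp [hA], by simp⟩
    · obtain ⟨y, hyA, hymax⟩ := A.exists_max_image f hA
      obtain ⟨S', hS'sub, hS'card, hS'sel⟩ := ih (A.erase y)
      have hyS' : y ∉ S' := fun h => (mem_erase.mp (hS'sub h)).1 rfl
      refine ⟨insert y S', ?_, ?_, ?_⟩
      · intro x hx
        rcases mem_insert.mp hx with h | h
        · rw [h]; exact hyA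
        · exact (erase_subset _ _) (hS'sub h)
      · rw [card_insert_of_notMem hyS', hS'card, card_erase_of_mem hyA]
        have : 1 ≤ A.card := card_pos.mpr hA
        omega
      · intro x hxA hxS z hz
        rcases mem_insert.mp hz with h | h
        · rw [h]; exact hymax x hxA
        · have hxy : x ≠ y := fun he => hxS (he ▸ mem_insert_self y S')
          exact hS'sel x (mem_erase.mpr ⟨hxy, hxA⟩) (fun hc => hxS (mem_insert_of_mem hc)) z h

/-- The key scheduling lemma: backwards greedy for an outforest. Given a value
function `μ` strictly decreasing along the parent map, and counting bounds,
there is a schedule in slots `[1, M]` with `μ j ≤ C j`, parents strictly before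
children, and at most `m` jobs per slot. -/
lemma outforest_schedule (m : ℕ) (μ : Fin n → ℕ) (par : Fin n → Fin n)
    (root : Fin n → Prop) (hμ1 : ∀ j, 1 ≤ μ j)
    (hpar : ∀ j, ¬ root j → μ (par j) < μ j) :
    ∀ (M : ℕ) (R : Finset (Fin n)), (∀ j ∈ R, ¬ root j → par j ∈ R) →
      (∀ t : ℕ, (R.filter fun j => t < μ j).card ≤ m * (M - t)) →
      ∃ C : Fin n → ℕ, (∀ j ∈ R, μ j ≤ C j ∧ C j ≤ M) ∧
        (∀ j ∈ R, ¬ root j → C (par j) < C j) ∧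
        (∀ s : ℕ, (R.filter fun j => C j = s).card ≤ m) := by
  classical
  intro M
  induction M with
  | zero =>
    intro R _ hcount
    have hR : R = ∅ := by
      have h0 := hcount 0
      simp only [Nat.sub_zero, Nat.mul_zero, Nat.le_zero, card_eq_zero] at h0
      have : R.filter (fun j => 0 < μ j) = R := by
        apply filter_true_of_mem
        intro j _
        exact hμ1 j
      rw [this] at h0
      exact h0
    refine ⟨fun _ => 0, ?_, ?_, ?_⟩ <;> simp [hR]
  | succ M ih =>
    intro R hclosed hcount
    set A : Finset (Fin n) := R.filter (fun j => ∀ k ∈ R, ¬ root k → par k ≠ j) with hAdef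
    obtain ⟨S, hSA, hScard, hSsel⟩ := exists_select m μ A
    have hAR : A ⊆ R := filter_subset _ _
    have hSR : S ⊆ R := hSA.trans hAR
    -- all values are at most M+1
    have hmu_le : ∀ j ∈ R, μ j ≤ M + 1 := by
      intro j hj
      by_contra h
      push_neg at h
      have hc := hcount (M + 1)
      rw [Nat.sub_self, Nat.mul_zero, Nat.le_zero, card_eq_zero] at hc
      have : j ∈ R.filter fun j => M + 1 < μ j := mem_filter.mpr ⟨hj, h⟩
      rw [hc] at this
      exact absurd this (notMem_empty j)
    -- jobs of value M+1 are all selected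
    have hScard_le : S.card ≤ m := hScard ▸ min_le_left _ _
    have hcrit : ∀ j ∈ R, μ j = M + 1 → j ∈ S := by
      intro j hj hμj
      have hjA : j ∈ A := by
        rw [hAdef, mem_filter]
        refine ⟨hj, ?_⟩
        intro k hk hkroot hpark
        have := hpar k hkroot
        rw [hpark, hμj] at this
        have := hmu_le k hk
        omega
      by_contra hjS
      -- then S.card = m and all members of S have value ≥ M+1
      have hbig : ∀ y ∈ S, M < μ y := by
        intro y hy
        have := hSsel j hjA hjS y hy
        omega
      have hSm : S.card = m := by
        have hlt : S.card < A.card := card_lt_card (ssubset_iff_of_subset hSA |>.mpr ⟨j, hjA, hjS⟩)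
        rcases Nat.le_total m A.card with h | h
        · rw [hScard]; omega
        · rw [hScard] at hlt ⊢; omega
      have hsubset : insert j S ⊆ R.filter fun x => M < μ x := by
        intro x hx
        rcases mem_insert.mp hx with h | h
        · rw [h]; exact mem_filter.mpr ⟨hj, by omega⟩
        · exact mem_filter.mpr ⟨hSR h, hbig x h⟩
      have hcard : (insert j S).card = m + 1 := by
        rw [card_insert_of_notMem hjS, hSm]
      have := card_le_card hsubset
      have hcM := hcount M
      have : m * (M + 1 - M) = m := by
        have : M + 1 - M = 1 := by omega
        rw [this, Nat.mul_one]
      omega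
    -- residual closure
    have hclosed' : ∀ j ∈ R \ S, ¬ root j → par j ∈ R \ S := by
      intro j hj hroot
      rw [mem_sdiff] at hj ⊢
      refine ⟨hclosed j hj.1 hroot, ?_⟩
      intro hpS
      have hpA : par j ∈ A := hSA hpS
      rw [hAdef, mem_filter] at hpA
      exact hpA.2 j hj.1 hroot rfl
    -- residual counting
    have hcount' : ∀ t : ℕ, ((R \ S).filter fun j => t < μ j).card ≤ m * (M - t) := by
      intro t
      by_cases ht : M ≤ t
      · have hempty : (R \ S).filter (fun j => t < μ j) = ∅ := by
          rw [eq_empty_iff_forall_notMem]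
          intro j hj
          rw [mem_filter, mem_sdiff] at hj
          obtain ⟨⟨hjR, hjS⟩, hjt⟩ := hj
          have h1 := hmu_le j hjR
          have : μ j = M + 1 := by omega
          exact hjS (hcrit j hjR this)
        rw [hempty]
        simp
      · push_neg at ht
        have hRlevel := hcount t
        have hmul : m * (M + 1 - t) = m * (M - t) + m := by
          have : M + 1 - t = (M - t) + 1 := by omega
          rw [this, Nat.mul_succ]
        by_cases hX : S.card = m ∧ ∀ y ∈ S, t < μ y
        · have hsub : (R \ S).filter (fun j => t < μ j)
              = (R.filter fun j => t < μ j) \ S := by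
            ext x
            simp only [mem_filter, mem_sdiff]
            tauto
          have hSsubf : S ⊆ R.filter fun j => t < μ j := by
            intro y hy
            exact mem_filter.mpr ⟨hSR hy, hX.2 y hy⟩
          rw [hsub, card_sdiff_of_subset hSsubf]
          omega
        · -- the fiber argument
          have hstar : ∀ a ∈ A, t < μ a → a ∈ S := by
            intro a haA hta
            by_contra haS
            apply hX
            have hSm : S.card = m := by
              have hlt : S.card < A.card :=
                card_lt_card (ssubset_iff_of_subset hSA |>.mpr ⟨a, haA, haS⟩)
              rcases Nat.le_total m A.card with h | h
              · rw [hScard]; omega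
              · rw [hScard] at hlt ⊢; omega
            exact ⟨hSm, fun y hy => lt_of_lt_of_le hta (hSsel a haA haS y hy)⟩
          -- descent to a childless descendant
          have hdesc : ∀ j ∈ R, ∃ a, a ∈ A ∧ ∃ k : ℕ, par^[k] a = j ∧
              ∀ i < k, par^[i] a ∈ R ∧ ¬ root (par^[i] a) := by
            have key : ∀ v : ℕ, ∀ j ∈ R, M + 2 - μ j ≤ v → ∃ a, a ∈ A ∧ ∃ k : ℕ,
                par^[k] a = j ∧ ∀ i < k, par^[i] a ∈ R ∧ ¬ root (par^[i] a) := by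
              intro v
              induction v with
              | zero =>
                intro j hj hv
                have := hmu_le j hj
                omega
              | succ v ihv =>
                intro j hj hv
                by_cases hjA : j ∈ A
                · exact ⟨j, hjA, 0, rfl, fun i hi => absurd hi (by omega)⟩
                · have : ∃ k ∈ R, ¬ root k ∧ par k = j := by
                    rw [hAdef, mem_filter] at hjA
                    push_neg at hjA
                    obtain ⟨c, hcR, hcroot, hcpar⟩ := hjA hj
                    exact ⟨c, hcR, hcroot, hcpar⟩
                  obtain ⟨c, hcR, hcroot, hcpar⟩ := this
                  have hμc : μ j < μ c := by
                    have := hpar c hcroot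
                    rw [hcpar] at this
                    exact this
                  obtain ⟨a, haA, k, hk, hval⟩ := ihv c hcR (by have := hmu_le c hcR; omega)
                  refine ⟨a, haA, k + 1, ?_, ?_⟩
                  · rw [Function.iterate_succ_apply', hk, hcpar]
                  · intro i hi
                    rcases Nat.lt_succ_iff_lt_or_eq.mp hi with h | h
                    · exact hval i h
                    · rw [h, hk]
                      exact ⟨hcR, hcroot⟩
            intro j hj
            exact key (M + 2) j hj (by omega)
          -- strict decrease along valid iterates
          have hdec : ∀ (x : Fin n) (k : ℕ), (∀ i < k, ¬ root (par^[i] x)) →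
              μ (par^[k] x) + k ≤ μ x := by
            intro x k
            induction k with
            | zero => simp
            | succ k ihk =>
              intro h
              have h1 := ihk (fun i hi => h i (by omega))
              have h2 : μ (par^[k + 1] x) < μ (par^[k] x) := by
                rw [Function.iterate_succ_apply']
                exact hpar _ (h k (by omega))
              omega
          -- choice of witness
          set D : Fin n → Prop := fun j => ∃ a, a ∈ A ∧ ∃ k : ℕ, par^[k] a = j ∧
              ∀ i < k, par^[i] a ∈ R ∧ ¬ root (par^[i] a) with hDdef
          set aOf : Fin n → Fin n := fun j => if h : D j then h.choose else j with haOfdef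
          have haOf : ∀ j ∈ R, aOf j ∈ A ∧ ∃ k : ℕ, par^[k] (aOf j) = j ∧
              ∀ i < k, par^[i] (aOf j) ∈ R ∧ ¬ root (par^[i] (aOf j)) := by
            intro j hj
            have h : D j := hdesc j hj
            rw [haOfdef]
            simp only [dif_pos h]
            exact h.choose_spec
          -- the injection
          have hmain : ((R \ S).filter fun j => t < μ j).card
              ≤ (S ×ˢ Finset.Ioc t M).card := by
            apply card_le_card_of_injOn (fun j => (aOf j, μ j))
            · intro j hj
              rw [mem_coe, mem_filter, mem_sdiff] at hj
              obtain ⟨⟨hjR, hjS⟩, hjt⟩ := hj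
              obtain ⟨haA, k, hk, hval⟩ := haOf j hjR
              have hle : μ j ≤ μ (aOf j) := by
                have := hdec (aOf j) k (fun i hi => (hval i hi).2)
                rw [hk] at this
                omega
              have haS : aOf j ∈ S := hstar _ haA (by omega)
              have hμjM : μ j ≤ M := by
                by_contra hcon
                push_neg at hcon
                have := hmu_le j hjR
                exact hjS (hcrit j hjR (by omega))
              exact mem_product.mpr ⟨haS, Finset.mem_Ioc.mpr ⟨hjt, hμjM⟩⟩
            · intro j1 hj1 j2 hj2 heq
              simp only [coe_filter, Set.mem_setOf_eq] at hj1 hj2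
              obtain ⟨hj1RS, _⟩ := hj1
              obtain ⟨hj2RS, _⟩ := hj2
              have hj1R : j1 ∈ R := (mem_sdiff.mp hj1RS).1
              have hj2R : j2 ∈ R := (mem_sdiff.mp hj2RS).1
              have haeq : aOf j1 = aOf j2 := congrArg Prod.fst heq
              have hμeq : μ j1 = μ j2 := congrArg Prod.snd heq
              obtain ⟨_, k1, hk1, hval1⟩ := haOf j1 hj1R
              obtain ⟨_, k2, hk2, hval2⟩ := haOf j2 hj2R
              rw [haeq] at hk1 hval1
              set a := aOf j2
              -- general claim: k1 < k2 or k2 < k1 leads to contradiction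
              have main : ∀ ka kb : ℕ, ka < kb →
                  (∀ i < kb, par^[i] a ∈ R ∧ ¬ root (par^[i] a)) →
                  μ (par^[kb] a) < μ (par^[ka] a) := by
                intro ka kb hab hvb
                have hcomp : par^[kb] a = par^[kb - ka] (par^[ka] a) := by
                  rw [← Function.iterate_add_apply]
                  congr 1
                  omega
                have := hdec (par^[ka] a) (kb - ka) (by
                  intro i hi
                  rw [← Function.iterate_add_apply]
                  exact (hvb (i + ka) (by omega)).2)
                rw [← hcomp] at this
                omega
              rcases Nat.lt_trichotomy k1 k2 with h | h | h
              · have := main k1 k2 h hval2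
                rw [hk1, hk2] at this
                omega
              · rw [← hk1, ← hk2, h]
              · have := main k2 k1 h hval1
                rw [hk1, hk2] at this
                omega
          have hprod : (S ×ˢ Finset.Ioc t M).card = S.card * (M - t) := by
            rw [card_product, Nat.card_Ioc]
          have : S.card * (M - t) ≤ m * (M - t) :=
            Nat.mul_le_mul_right _ hScard_le
          omega
    obtain ⟨C', hb', hp', hc'⟩ := ih (R \ S) hclosed' hcount'
    refine ⟨fun j => if j ∈ S then M + 1 else C' j, ?_, ?_, ?_⟩
    · intro j hj
      by_cases hjS : j ∈ S
      · simp only [if_pos hjS]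
        exact ⟨hmu_le j hj, le_refl _⟩
      · simp only [if_neg hjS]
        have := hb' j (mem_sdiff.mpr ⟨hj, hjS⟩)
        omega
    · intro j hj hroot
      have hpRS : par j ∈ R \ S := by
        rw [mem_sdiff]
        refine ⟨hclosed j hj hroot, ?_⟩
        intro hpS
        have hpA : par j ∈ A := hSA hpS
        rw [hAdef, mem_filter] at hpA
        exact hpA.2 j hj hroot rfl
      have hpnS : par j ∉ S := (mem_sdiff.mp hpRS).2
      by_cases hjS : j ∈ S
      · simp only [if_pos hjS, if_neg hpnS]
        have := hb' (par j) hpRS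
        omega
      · simp only [if_neg hjS, if_neg hpnS]
        exact hp' j (mem_sdiff.mpr ⟨hj, hjS⟩) hroot
    · intro s
      by_cases hs : s = M + 1
      · have : (R.filter fun j => (if j ∈ S then M + 1 else C' j) = s) = S := by
          ext j
          simp only [mem_filter]
          constructor
          · rintro ⟨hjR, hjeq⟩
            by_cases hjS : j ∈ S
            · exact hjS
            · rw [if_neg hjS] at hjeq
              have := hb' j (mem_sdiff.mpr ⟨hjR, hjS⟩)
              omega
          · intro hjS
            exact ⟨hSR hjS, by rw [if_pos hjS, hs]⟩
        rw [this]
        exact hScard_le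
      · have : (R.filter fun j => (if j ∈ S then M + 1 else C' j) = s)
            = ((R \ S).filter fun j => C' j = s) := by
          ext j
          simp only [mem_filter, mem_sdiff]
          constructor
          · rintro ⟨hjR, hjeq⟩
            by_cases hjS : j ∈ S
            · rw [if_pos hjS] at hjeq
              exact absurd hjeq.symm hs
            · rw [if_neg hjS] at hjeq
              exact ⟨⟨hjR, hjS⟩, hjeq⟩
          · rintro ⟨⟨hjR, hjS⟩, hjeq⟩
            exact ⟨hjR, by rw [if_neg hjS]; exact hjeq⟩
        rw [this]
        exact hc' s

end AuxLemmas

/-- Reduction of OR-precedence to an outforest: replacing each nonempty predecessor set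
`P j` by the singleton consisting of the predecessor of `j` in its minimal chain `L j`
does not change the minimum makespan over feasible unit schedules. -/
theorem reduction_to_outforest {n m : ℕ} (hm : 1 ≤ m)
    (P : Fin n → Finset (Fin n)) (r : Fin n → ℕ)
    (hex : ∃ C : Fin n → ℕ, FeasibleUnit m P r C)
    (L : Fin n → List (Fin n)) (hL : ClosedCollection P r L)
    (P' : Fin n → Finset (Fin n))
    (hP'empty : ∀ j, P j = ∅ → P' j = ∅)
    (hP'pred : ∀ j, P j ≠ ∅ →
      ∃ pre : Fin n, ((L j).dropLast).getLast? = some pre ∧ P' j = {pre}) :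
    sInf {v | ∃ C : Fin n → ℕ, FeasibleUnit m P' r C ∧ makespanU C = v} =
      sInf {v | ∃ C : Fin n → ℕ, FeasibleUnit m P r C ∧ makespanU C = v} := by
  classical
  set μ : Fin n → ℕ := mc P r (fun _ => 1) with hμdef
  -- basic facts about μ
  have hμr : ∀ j, r j + 1 ≤ μ j := by
    intro j
    obtain ⟨⟨hne, hlast, hhead, hchain⟩, hval, _⟩ := hL j
    have := chainValue_last_ge r (fun _ => 1) hlast
    rw [hval] at this
    exact this
  have hμ1 : ∀ j, 1 ≤ μ j := fun j => le_trans (by omega) (hμr j)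
  -- structure of the predecessor from the minimal chain
  have hpre : ∀ j, P j ≠ ∅ → ∃ q : Fin n, q ∈ P j ∧ P' j = {q} ∧ μ q < μ j := by
    intro j hPj
    obtain ⟨q, hqlast, hq⟩ := hP'pred j hPj
    obtain ⟨⟨hne, hlast, hhead, hchain⟩, hval, _⟩ := hL j
    have hdecomp : (L j).dropLast ++ [j] = L j :=
      List.dropLast_append_getLast? j (by rw [hlast]; rfl)
    set Ml := (L j).dropLast with hMldef
    have hMlne : Ml ≠ [] := by
      intro h
      rw [h] at hqlast
      simp at hqlast
    have hchainMl : IsChainTo P q Ml := by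
      refine ⟨hMlne, hqlast, ?_, ?_⟩
      · intro x hx
        apply hhead x
        rw [← hdecomp, List.head?_append_of_ne_nil _ hMlne]
        exact hx
      · have := hchain
        unfold List.Chain' at this; rw [← hdecomp, List.isChain_append] at this
        exact this.1
    have hqPj : q ∈ P j := by
      have := hchain
      unfold List.Chain' at this; rw [← hdecomp, List.isChain_append] at this
      exact this.2.2 q (by rw [hqlast]; rfl) j rfl
    refine ⟨q, hqPj, hq, ?_⟩
    have h1 : μ q ≤ chainValue r (fun _ => 1) Ml := mc_le_chainValue P r _ hchainMl
    have h2 : chainValue r (fun _ => 1) (Ml ++ [j])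
        = max (r j) (chainValue r (fun _ => 1) Ml) + 1 :=
      chainValue_concat r _ Ml hMlne j
    have h3 : chainValue r (fun _ => 1) (Ml ++ [j]) = μ j := by
      rw [hdecomp]; exact hval
    have : chainValue r (fun _ => 1) Ml < μ j := by
      rw [← h3, h2]
      have := le_max_right (r j) (chainValue r (fun _ => 1) Ml)
      omega
    omega
  -- direction: P'-feasible implies P-feasible
  have hP'toP : ∀ C : Fin n → ℕ, FeasibleUnit m P' r C → FeasibleUnit m P r C := by
    intro C hC
    obtain ⟨h1, h2, h3, h4⟩ := hC
    refine ⟨h1, h2, h3, ?_⟩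
    intro j hPj
    obtain ⟨q, hqPj, hq, _⟩ := hpre j hPj
    have hne' : P' j ≠ ∅ := by
      rw [hq]
      exact Finset.singleton_ne_empty q
    obtain ⟨i, hi, hiC⟩ := h4 j hne'
    rw [hq, Finset.mem_singleton] at hi
    exact ⟨q, hqPj, hi ▸ hiC⟩
  -- nonemptiness and the P-optimum
  set SP : Set ℕ := {v | ∃ C : Fin n → ℕ, FeasibleUnit m P r C ∧ makespanU C = v} with hSPdef
  set SP' : Set ℕ := {v | ∃ C : Fin n → ℕ, FeasibleUnit m P' r C ∧ makespanU C = v} with hSP'def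
  have hSPne : SP.Nonempty := by
    obtain ⟨C, hC⟩ := hex
    exact ⟨makespanU C, C, hC, rfl⟩
  have hMvmem : sInf SP ∈ SP := Nat.sInf_mem hSPne
  obtain ⟨C, hC, hCmak⟩ := hMvmem
  set Mv : ℕ := sInf SP with hMvdef
  have hCle : ∀ j, C j ≤ Mv := by
    intro j
    rw [← hCmak]
    exact Finset.le_sup (Finset.mem_univ j)
  have hlb : ∀ j, μ j ≤ C j := mc_le_of_feasible hC hL
  -- parent map
  set par : Fin n → Fin n := fun j => if h : P j ≠ ∅ then (hpre j h).choose else j with hpardef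
  set root : Fin n → Prop := fun j => P j = ∅ with hrootdef
  have hparspec : ∀ j (h : P j ≠ ∅), par j ∈ P j ∧ P' j = {par j} ∧ μ (par j) < μ j := by
    intro j h
    rw [hpardef]
    simp only [dif_pos h]
    exact (hpre j h).choose_spec
  have hpar : ∀ j, ¬ root j → μ (par j) < μ j := by
    intro j hj
    exact (hparspec j hj).2.2
  -- counting bounds
  have hcount : ∀ t : ℕ, (Finset.univ.filter fun j : Fin n => t < μ j).card ≤ m * (Mv - t) := by
    intro t
    have hsub : (Finset.univ.filter fun j : Fin n => t < μ j)
        ⊆ (Finset.Ioc t Mv).biUnion fun s => Finset.univ.filter fun j : Fin n => C j = s := by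
      intro j hj
      rw [Finset.mem_filter] at hj
      rw [Finset.mem_biUnion]
      exact ⟨C j, Finset.mem_Ioc.mpr ⟨lt_of_lt_of_le hj.2 (hlb j), hCle j⟩,
        Finset.mem_filter.mpr ⟨Finset.mem_univ j, rfl⟩⟩
    calc (Finset.univ.filter fun j : Fin n => t < μ j).card
        ≤ ((Finset.Ioc t Mv).biUnion fun s =>
            Finset.univ.filter fun j : Fin n => C j = s).card := Finset.card_le_card hsub
      _ ≤ ∑ s ∈ Finset.Ioc t Mv, (Finset.univ.filter fun j : Fin n => C j = s).card :=
          Finset.card_biUnion_le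
      _ ≤ ∑ _s ∈ Finset.Ioc t Mv, m := Finset.sum_le_sum (fun s _ => hC.2.1 s)
      _ = (Mv - t) * m := by rw [Finset.sum_const, Nat.card_Ioc, smul_eq_mul]
      _ = m * (Mv - t) := Nat.mul_comm _ _
  -- apply the outforest scheduling lemma
  obtain ⟨C', hb', hp', hc'⟩ := outforest_schedule m μ par root hμ1 hpar Mv Finset.univ
    (fun j _ _ => Finset.mem_univ _) hcount
  have hfeas' : FeasibleUnit m P' r C' := by
    refine ⟨?_, ?_, ?_, ?_⟩
    · intro j
      have := (hb' j (Finset.mem_univ j)).1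
      have := hμ1 j
      omega
    · exact hc'
    · intro j
      have := (hb' j (Finset.mem_univ j)).1
      have := hμr j
      omega
    · intro j hne'
      have hPj : P j ≠ ∅ := by
        intro h
        exact hne' (hP'empty j h)
      obtain ⟨_, hq, _⟩ := hparspec j hPj
      rw [hq]
      exact ⟨par j, Finset.mem_singleton_self _, hp' j (Finset.mem_univ j) hPj⟩
  have hmak' : makespanU C' ≤ Mv := by
    apply Finset.sup_le
    intro j _
    exact (hb' j (Finset.mem_univ j)).2
  have h1 : sInf SP' ≤ sInf SP := le_trans (Nat.sInf_le ⟨C', hfeas', rfl⟩) hmak'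
  have hSP'ne : SP'.Nonempty := ⟨makespanU C', C', hfeas', rfl⟩
  have h2 : sInf SP ≤ sInf SP' := by
    have hmem : sInf SP' ∈ SP' := Nat.sInf_mem hSP'ne
    obtain ⟨D, hD, hDmak⟩ := hmem
    exact Nat.sInf_le ⟨D, hP'toP D hD, hDmak⟩
  exact le_antisymm h1 h2
end

section
/- A feasible non-preemptive schedule on m ≥ 1 machines exists if and only if for every job k there exists a chain to k (i.e., every job is reachable in the precedence graph from a job without predecessors). -/
/-- A feasible non-preemptive schedule on `m ≥ 1` machines exists iff every job admits
a chain to it. -/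
theorem feasible_iff_chains {n m : ℕ} (hm : 1 ≤ m)
    (P : Fin n → Finset (Fin n)) (p r : Fin n → ℕ) (hp : ∀ j, 1 ≤ p j) :
    (∃ (S : Fin n → ℕ) (M : Fin n → Fin m),
        ValidSchedule p S M ∧ FeasibleSchedule P r p S) ↔
      ∀ k : Fin n, ∃ L : List (Fin n), IsChainTo P k L := by
  constructor
  · rintro ⟨S, M, hV, hF⟩ k
    have key : ∀ t : ℕ, ∀ k : Fin n, S k ≤ t → ∃ L, IsChainTo P k L := by
      intro t
      induction t with
      | zero =>
        intro k hk
        by_cases hPk : P k = ∅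
        · exact ⟨[k], by simp, by simp, fun h hh => by
            simp at hh; subst hh; exact hPk, List.isChain_singleton _⟩
        · obtain ⟨i, hi, hC⟩ := hF.2 k hPk
          have := hp i; omega
      | succ t ih =>
        intro k hk
        by_cases hPk : P k = ∅
        · exact ⟨[k], by simp, by simp, fun h hh => by
            simp at hh; subst hh; exact hPk, List.isChain_singleton _⟩
        · obtain ⟨i, hi, hC⟩ := hF.2 k hPk
          have hSi : S i ≤ t := by have := hp i; omega
          obtain ⟨L, hLne, hlast, hhead, hch⟩ := ih i hSi
          refine ⟨L ++ [k], by simp, by simp, ?_, ?_⟩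
          · intro h hh
            cases L with
            | nil => exact absurd rfl hLne
            | cons a L' => simp at hh; subst hh; exact hhead a rfl
          · rw [List.Chain', List.isChain_append]
            refine ⟨hch, List.isChain_singleton _, ?_⟩
            intro x hx y hy
            simp at hy
            rw [hlast] at hx
            simp at hx
            subst hx; subst hy; exact hi
    exact key (S k) k le_rfl
  · intro hchain
    rcases Nat.eq_zero_or_pos n with hn | hn
    · subst hn
      exact ⟨Fin.elim0, Fin.elim0, fun i => i.elim0, fun i => i.elim0, fun i => i.elim0⟩
    · have hne : ∀ k : Fin n, {ℓ : ℕ | ∃ L, IsChainTo P k L ∧ L.length = ℓ}.Nonempty := by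
        intro k
        obtain ⟨L, hL⟩ := hchain k
        exact ⟨L.length, L, hL, rfl⟩
      set d : Fin n → ℕ := fun k => sInf {ℓ : ℕ | ∃ L, IsChainTo P k L ∧ L.length = ℓ} with hd
      have hdmem : ∀ k, ∃ L, IsChainTo P k L ∧ L.length = d k := fun k => Nat.sInf_mem (hne k)
      have hdpred : ∀ k, P k ≠ ∅ → ∃ i ∈ P k, d i < d k := by
        intro k hPk
        obtain ⟨L, ⟨hLne, hlast, hhead, hch⟩, hlen⟩ := hdmem k
        have hklast : L.getLast hLne = k := by
          rw [List.getLast?_eq_getLast hLne] at hlast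
          exact Option.some_injective _ hlast
        have hLdecomp : L.dropLast ++ [k] = L := by
          rw [← hklast]; exact List.dropLast_append_getLast hLne
        have hL'ne : L.dropLast ≠ [] := by
          intro h
          rw [h] at hLdecomp
          simp at hLdecomp
          have : L.head? = some k := by rw [← hLdecomp]; simp
          exact hPk (hhead k this)
        have hch2 : (L.dropLast ++ [k]).Chain' (fun a b => a ∈ P b) := by rw [hLdecomp]; exact hch
        rw [List.Chain', List.isChain_append] at hch2
        obtain ⟨hch', -, hrel⟩ := hch2
        set i := L.dropLast.getLast hL'ne with hi
        have hiP : i ∈ P k := by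
          apply hrel
          · rw [List.getLast?_eq_getLast hL'ne]
            exact Option.mem_some_iff.mpr hi.symm
          · simp
        refine ⟨i, hiP, ?_⟩
        have hchain' : IsChainTo P i L.dropLast := by
          refine ⟨hL'ne, List.getLast?_eq_getLast hL'ne, ?_, hch'⟩
          intro h hh
          apply hhead
          rw [← hLdecomp]
          cases hL : L.dropLast with
          | nil => exact absurd hL hL'ne
          | cons a L' => rw [hL] at hh; simp at hh; subst hh; simp
        have hdi : d i ≤ L.dropLast.length := Nat.sInf_le ⟨L.dropLast, hchain', rfl⟩
        have h1 : L.dropLast.length = L.length - 1 := List.length_dropLast (xs := L)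
        have h2 : 1 ≤ L.length := List.length_pos_iff.mpr hLne
        omega
      set B : ℕ := Finset.univ.sup p + 1 with hB
      have hBp : ∀ j, p j ≤ B := fun j =>
        le_trans (Finset.le_sup (Finset.mem_univ j)) (Nat.le_succ _)
      set R : ℕ := Finset.univ.sup r with hR
      have hRr : ∀ j, r j ≤ R := fun j => Finset.le_sup (Finset.mem_univ j)
      set K : Fin n → ℕ := fun j => n * d j + j.val with hK
      set S : Fin n → ℕ := fun j => R + B * K j with hS
      have hstep : ∀ i j : Fin n, K i < K j → S i + p i ≤ S j := by
        intro i j h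
        have h1 : B * K i + B ≤ B * K j := by
          calc B * K i + B = B * (K i + 1) := by ring
          _ ≤ B * K j := Nat.mul_le_mul_left _ h
        have h2 := hBp i
        simp only [hS]
        omega
      have hKlt : ∀ i j : Fin n, d i < d j → K i < K j := by
        intro i j h
        have h1 : n * d i + n ≤ n * d j := by
          calc n * d i + n = n * (d i + 1) := by ring
          _ ≤ n * d j := Nat.mul_le_mul_left _ h
        have := i.isLt
        simp only [hK]
        omega
      have hKinj : ∀ i j : Fin n, i ≠ j → K i ≠ K j := by
        intro i j hij hKeq
        rcases lt_trichotomy (d i) (d j) with h | h | h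
        · exact absurd hKeq (Nat.ne_of_lt (hKlt i j h))
        · apply hij
          apply Fin.ext
          simp only [hK, h] at hKeq
          omega
        · exact absurd hKeq.symm (Nat.ne_of_lt (hKlt j i h))
      refine ⟨S, fun _ => ⟨0, hm⟩, ?_, ?_, ?_⟩
      · intro i j hij _ t ⟨⟨h1, h2⟩, ⟨h3, h4⟩⟩
        rcases (hKinj i j hij).lt_or_gt with h | h
        · have := hstep i j h; omega
        · have := hstep j i h; omega
      · intro j
        calc r j ≤ R := hRr j
        _ ≤ S j := Nat.le_add_right _ _
      · intro j hPj
        obtain ⟨i, hiP, hdij⟩ := hdpred j hPj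
        exact ⟨i, hiP, hstep i j (hKlt i j hdij)⟩
end

section
/- Existence of a closed collection of minimal chains: suppose every job has at least one chain to it. Then for every job k there exists a chain j_1, …, j_ℓ to k such that for every q with 1 ≤ q ≤ ℓ, the prefix j_1, …, j_q is a chain to j_q whose value equals mc(j_q); consequently there exists an assignment of a chain L_j of value mc(j) to every job j such that whenever a job i occurs in L_j, the chain L_i is the prefix of L_j ending at i. -/
namespace ClosedAux

variable {n : ℕ} {P : Fin n → Finset (Fin n)} {r p : Fin n → ℕ}

lemma chainValue_concat (M : List (Fin n)) (hM : M ≠ []) (j : Fin n) :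
    chainValue r p (M ++ [j]) = max (r j) (chainValue r p M) + p j := by
  obtain ⟨a, rest, rfl⟩ := List.exists_cons_of_ne_nil hM
  simp [chainValue, List.foldl_append]

lemma chainValue_le_append (M rest : List (Fin n)) (hM : M ≠ []) :
    chainValue r p M ≤ chainValue r p (M ++ rest) := by
  induction rest using List.reverseRecOn with
  | nil => simp
  | append_singleton rest a ih =>
      rw [← List.append_assoc, chainValue_concat _ (by simp [hM])]
      exact le_trans ih (le_trans (le_max_right _ _) (Nat.le_add_right _ _))

lemma mc_le {k : Fin n} {L : List (Fin n)} (hL : IsChainTo P k L) :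
    mc P r p k ≤ chainValue r p L :=
  Nat.sInf_le ⟨L, hL, rfl⟩

lemma exists_min {k : Fin n} (hk : ∃ L, IsChainTo P k L) :
    ∃ L, IsChainTo P k L ∧ chainValue r p L = mc P r p k := by
  obtain ⟨L, hL⟩ := hk
  have hne : {v | ∃ L, IsChainTo P k L ∧ chainValue r p L = v}.Nonempty :=
    ⟨chainValue r p L, L, hL, rfl⟩
  exact Nat.sInf_mem hne

lemma prefix_isChainTo {k : Fin n} {L : List (Fin n)} (hL : IsChainTo P k L)
    {q : ℕ} (hq : q < L.length) :
    IsChainTo P (L.get ⟨q, hq⟩) (L.take (q + 1)) := by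
  obtain ⟨hne, hlast, hhead, hch⟩ := hL
  refine ⟨?_, ?_, ?_, hch.take _⟩
  · apply List.ne_nil_of_length_pos
    rw [List.length_take]
    omega
  · have hlen : (L.take (q + 1)).length = q + 1 := by
      simp [Nat.min_eq_left (Nat.succ_le_of_lt hq)]
    rw [List.getLast?_eq_getElem?, hlen, List.getElem?_take]
    simp [hq, List.getElem?_eq_getElem hq]
  · intro h hh
    obtain ⟨a, rest, rfl⟩ := List.exists_cons_of_ne_nil hne
    simp only [List.take_succ_cons, List.head?_cons, Option.some.injEq] at hh
    exact hhead h (by simp [hh])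

lemma isChainTo_snoc {M : List (Fin n)} {i k : Fin n}
    (hM : IsChainTo P i M) (hik : i ∈ P k) : IsChainTo P k (M ++ [k]) := by
  obtain ⟨hne, hlast, hhead, hch⟩ := hM
  refine ⟨by simp, List.getLast?_concat, ?_, ?_⟩
  · intro h hh
    rw [List.head?_append, Option.or_eq_some_iff] at hh
    rcases hh with hh | ⟨hh, _⟩
    · exact hhead h hh
    · exact absurd (List.head?_eq_none_iff.mp hh) hne
  · unfold List.Chain'
    rw [List.isChain_append]
    refine ⟨hch, List.isChain_singleton _, ?_⟩
    intro x hx y hy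
    simp at hy
    rw [hlast] at hx
    simp at hx
    subst hx; subst hy; exact hik

lemma isChainTo_decomp {k : Fin n} {L : List (Fin n)} (hL : IsChainTo P k L)
    (h2 : 2 ≤ L.length) :
    ∃ M i, L = M ++ [k] ∧ IsChainTo P i M ∧ i ∈ P k := by
  obtain ⟨hne, hlast, hhead, hch⟩ := hL
  have hLk : L.getLast hne = k := by
    have := List.getLast?_eq_getLast hne
    rw [hlast] at this; exact (Option.some.injEq _ _ ▸ this.symm)
  have hdec : L.dropLast ++ [k] = L := by rw [← hLk]; exact List.dropLast_append_getLast hne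
  set M := L.dropLast with hMdef
  have hMne : M ≠ [] := by
    intro h
    have := congrArg List.length hdec
    simp [h] at this; omega
  have hchM : List.Chain' (fun a b => a ∈ P b) M ∧
      ∀ x ∈ M.getLast?, ∀ y ∈ ([k] : List (Fin n)).head?, x ∈ P y := by
    have := hdec ▸ hch
    unfold List.Chain' at this
    rw [List.isChain_append] at this
    exact ⟨this.1, this.2.2⟩
  set i := M.getLast hMne with hidef
  refine ⟨M, i, hdec.symm, ⟨hMne, (List.getLast?_eq_getLast hMne), ?_, hchM.1⟩, ?_⟩
  · intro h hh
    apply hhead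
    rw [← hdec, List.head?_append, hh]; rfl
  · exact hchM.2 i (by rw [List.getLast?_eq_getLast hMne]; rfl) k rfl

lemma chainValue_lt_concat (M : List (Fin n)) (hM : M ≠ []) (j : Fin n) (hp : 1 ≤ p j) :
    chainValue r p M < chainValue r p (M ++ [j]) := by
  rw [chainValue_concat M hM]
  have := le_max_right (r j) (chainValue r p M)
  omega

end ClosedAux

namespace ClosedAux

variable {n : ℕ} {P : Fin n → Finset (Fin n)} {r p : Fin n → ℕ}

lemma part1 (hp : ∀ j, 1 ≤ p j) (hchain : ∀ k : Fin n, ∃ L, IsChainTo P k L) :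
    ∀ k : Fin n, ∃ L : List (Fin n), IsChainTo P k L ∧ chainValue r p L = mc P r p k ∧
        ∀ q : ℕ, ∀ hq : q < L.length,
          IsChainTo P (L.get ⟨q, hq⟩) (L.take (q + 1)) ∧
            chainValue r p (L.take (q + 1)) = mc P r p (L.get ⟨q, hq⟩) := by
  suffices H : ∀ m : ℕ, ∀ k : Fin n, mc P r p k = m →
      ∃ L : List (Fin n), IsChainTo P k L ∧ chainValue r p L = mc P r p k ∧
        ∀ q : ℕ, ∀ hq : q < L.length,
          IsChainTo P (L.get ⟨q, hq⟩) (L.take (q + 1)) ∧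
            chainValue r p (L.take (q + 1)) = mc P r p (L.get ⟨q, hq⟩) by
    exact fun k => H _ k rfl
  intro m
  induction m using Nat.strong_induction_on with
  | _ m ih =>
    intro k hm
    obtain ⟨M₀, hM₀, hval⟩ := exists_min (r := r) (p := p) (hchain k)
    by_cases h2 : 2 ≤ M₀.length
    · -- decompose
      obtain ⟨M, i, hMeq, hMi, hik⟩ := isChainTo_decomp hM₀ h2
      have hlt : chainValue r p M < chainValue r p M₀ := by
        rw [hMeq]; exact chainValue_lt_concat M hMi.1 k (hp k)
      have hmci : mc P r p i < m := by
        have h1 : mc P r p i ≤ chainValue r p M := mc_le hMi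
        omega
      obtain ⟨N, hN, hNval, hNpref⟩ := ih (mc P r p i) hmci i rfl
      refine ⟨N ++ [k], isChainTo_snoc hN hik, ?_, ?_⟩
      · have hle : chainValue r p (N ++ [k]) ≤ m := by
          rw [chainValue_concat N hN.1, hNval]
          have h1 : mc P r p i ≤ chainValue r p M := mc_le hMi
          have h2' : chainValue r p M₀ = m := by rw [hval, hm]
          rw [hMeq, chainValue_concat M hMi.1] at h2'
          have : max (r k) (mc P r p i) ≤ max (r k) (chainValue r p M) :=
            max_le_max le_rfl h1
          omega
        have hge : m ≤ chainValue r p (N ++ [k]) := by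
          rw [← hm]; exact mc_le (isChainTo_snoc hN hik)
        omega
      · intro q hq
        rcases lt_or_ge q N.length with hqN | hqN
        · have ht : (N ++ [k]).take (q + 1) = N.take (q + 1) :=
            List.take_append_of_le_length (Nat.succ_le_of_lt hqN)
          have hg : (N ++ [k]).get ⟨q, hq⟩ = N.get ⟨q, hqN⟩ := by
            simp only [List.get_eq_getElem]
            exact List.getElem_append_left hqN
          rw [ht, hg]
          exact hNpref q hqN
        · have hqN' : q = N.length := by
            simp only [List.length_append, List.length_singleton] at hq
            omega
          have hg : (N ++ [k]).get ⟨q, hq⟩ = k := by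
            simp only [List.get_eq_getElem]
            exact List.getElem_concat_length hqN' hq
          have ht : (N ++ [k]).take (q + 1) = N ++ [k] :=
            List.take_of_length_le (by simp [hqN'])
          rw [ht, hg]
          refine ⟨isChainTo_snoc hN hik, ?_⟩
          have hge : mc P r p k ≤ chainValue r p (N ++ [k]) :=
            mc_le (isChainTo_snoc hN hik)
          have hle : chainValue r p (N ++ [k]) ≤ mc P r p k := by
            rw [chainValue_concat N hN.1, hNval]
            have h1 : mc P r p i ≤ chainValue r p M := mc_le hMi
            have h2' : chainValue r p M₀ = mc P r p k := hval
            rw [hMeq, chainValue_concat M hMi.1] at h2'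
            have : max (r k) (mc P r p i) ≤ max (r k) (chainValue r p M) :=
              max_le_max le_rfl h1
            omega
          omega
    · -- length 1
      have h1 : M₀.length = 1 := by
        have h0 : M₀.length ≠ 0 := fun h => hM₀.1 (List.length_eq_zero_iff.mp h)
        omega
      obtain ⟨x, hx⟩ := List.length_eq_one_iff.mp h1
      subst hx
      have hxk : x = k := by simpa using hM₀.2.1
      subst hxk
      refine ⟨[x], hM₀, hval, ?_⟩
      intro q hq
      have hq0 : q = 0 := by simp at hq; omega
      subst hq0
      simpa using ⟨hM₀, hval⟩

end ClosedAux

namespace ClosedAux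

variable {n : ℕ} {P : Fin n → Finset (Fin n)} {r p : Fin n → ℕ}

lemma mem_mc_le {k : Fin n} {L : List (Fin n)} (hL : IsChainTo P k L)
    {i : Fin n} (hi : i ∈ L) : mc P r p i ≤ chainValue r p L := by
  obtain ⟨q, hget⟩ := List.mem_iff_get.mp hi
  have h1 : mc P r p i ≤ chainValue r p (L.take (q.1 + 1)) := by
    rw [← hget]
    exact mc_le (prefix_isChainTo hL q.2)
  refine le_trans h1 ?_
  have hdec : L.take (q.1 + 1) ++ L.drop (q.1 + 1) = L := List.take_append_drop _ _
  have hne : L.take (q.1 + 1) ≠ [] := by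
    apply List.ne_nil_of_length_pos
    rw [List.length_take]
    have := q.2
    omega
  calc chainValue r p (L.take (q.1 + 1))
      ≤ chainValue r p (L.take (q.1 + 1) ++ L.drop (q.1 + 1)) :=
        chainValue_le_append _ _ hne
    _ = chainValue r p L := by rw [hdec]

lemma claim (hp : ∀ j, 1 ≤ p j) (hchain : ∀ k : Fin n, ∃ L, IsChainTo P k L) (j : Fin n) :
    ∃ o : Option (Fin n),
      (o = none → IsChainTo P j [j] ∧ chainValue r p [j] = mc P r p j) ∧
      (∀ i, o = some i → i ∈ P j ∧ mc P r p i < mc P r p j ∧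
        max (r j) (mc P r p i) + p j = mc P r p j) := by
  obtain ⟨G, hG, hGval, hGpref⟩ := part1 hp hchain j
  by_cases h2 : 2 ≤ G.length
  · obtain ⟨M, i, hMeq, hMi, hij⟩ := isChainTo_decomp hG h2
    refine ⟨some i, by simp, ?_⟩
    rintro i' hi'
    injection hi' with hi'
    subst hi'
    have hMne := hMi.1
    have hMlen : 1 ≤ M.length := by
      rcases Nat.eq_zero_or_pos M.length with h | h
      · exact absurd (List.length_eq_zero_iff.mp h) hMne
      · exact h
    have hqlt : M.length - 1 < G.length := by
      rw [hMeq]; simp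
    -- prefix of G at index M.length - 1 is M with value mc of its last element i
    have hget : G.get ⟨M.length - 1, hqlt⟩ = i := by
      simp only [List.get_eq_getElem]
      have h1 : M.length - 1 < M.length := by omega
      have : G[M.length - 1] = M[M.length - 1] := by
        subst hMeq
        exact List.getElem_append_left h1
      rw [this]
      have hlast := hMi.2.1
      rw [List.getLast?_eq_getElem?, List.getElem?_eq_getElem h1] at hlast
      exact ((Option.some.injEq _ _ ▸ hlast).symm).symm
    have htake : G.take (M.length - 1 + 1) = M := by
      have h1 : M.length - 1 + 1 = M.length := by omega
      rw [h1, hMeq, List.take_append_of_le_length le_rfl, List.take_length]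
    have hpref := hGpref (M.length - 1) hqlt
    rw [htake, hget] at hpref
    have hMval : chainValue r p M = mc P r p i := hpref.2
    have hGval2 : chainValue r p G = max (r j) (mc P r p i) + p j := by
      rw [hMeq, chainValue_concat M hMne, hMval]
    refine ⟨hij, ?_, by rw [← hGval, hGval2]⟩
    have : mc P r p i ≤ max (r j) (mc P r p i) := le_max_right _ _
    have hpj := hp j
    omega
  · have h1 : G.length = 1 := by
      have h0 : G.length ≠ 0 := fun h => hG.1 (List.length_eq_zero_iff.mp h)
      omega
    obtain ⟨x, hx⟩ := List.length_eq_one_iff.mp h1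
    subst hx
    have hxk : x = j := by simpa using hG.2.1
    subst hxk
    exact ⟨none, fun _ => ⟨hG, hGval⟩, by simp⟩

lemma part2 (hp : ∀ j, 1 ≤ p j) (hchain : ∀ k : Fin n, ∃ L, IsChainTo P k L) :
    ∃ L : Fin n → List (Fin n), ∀ j : Fin n,
      IsChainTo P j (L j) ∧ chainValue r p (L j) = mc P r p j ∧
        ∀ i ∈ L j, L i <+: L j := by
  classical
  choose o ho1 ho2 using claim (r := r) hp hchain
  have key : ∀ m : ℕ, ∃ L : Fin n → List (Fin n), ∀ j : Fin n, mc P r p j < m →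
      IsChainTo P j (L j) ∧ chainValue r p (L j) = mc P r p j ∧
        ∀ i ∈ L j, L i <+: L j := by
    intro m
    induction m with
    | zero => exact ⟨fun _ => [], fun j h => absurd h (by omega)⟩
    | succ m ihm =>
      obtain ⟨L0, hL0⟩ := ihm
      refine ⟨fun j => if mc P r p j < m then L0 j
        else (o j).elim [j] (fun i => L0 i ++ [j]), ?_⟩
      intro j hj
      by_cases hjm : mc P r p j < m
      · simp only [if_pos hjm]
        obtain ⟨hc, hv, hcl⟩ := hL0 j hjm
        refine ⟨hc, hv, ?_⟩
        intro i hi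
        have hmi : mc P r p i < m := by
          have := mem_mc_le (r := r) (p := p) hc hi
          omega
        rw [if_pos hmi]
        exact hcl i hi
      · have hjm' : mc P r p j = m := by omega
        simp only [if_neg hjm]
        cases hoj : o j with
        | none =>
          obtain ⟨hc, hv⟩ := ho1 j hoj
          simp only [Option.elim]
          refine ⟨hc, hv, ?_⟩
          intro i hi
          simp at hi
          subst hi
          rw [if_neg hjm, hoj]
        | some i =>
          obtain ⟨hiP, hilt, hival⟩ := ho2 j i hoj
          have him : mc P r p i < m := by omega
          obtain ⟨hic, hiv, hicl⟩ := hL0 i him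
          simp only [Option.elim]
          have hchainj : IsChainTo P j (L0 i ++ [j]) := isChainTo_snoc hic hiP
          have hvalj : chainValue r p (L0 i ++ [j]) = mc P r p j := by
            rw [chainValue_concat _ hic.1, hiv, hival]
          refine ⟨hchainj, hvalj, ?_⟩
          intro x hx
          rw [List.mem_append] at hx
          rcases hx with hx | hx
          · have hmx : mc P r p x < m := by
              have := mem_mc_le (r := r) (p := p) hic hx
              omega
            rw [if_pos hmx]
            exact (hicl x hx).trans ⟨[j], rfl⟩
          · simp at hx
            subst hx
            rw [if_neg hjm, hoj]
  obtain ⟨L, hL⟩ := key ((Finset.univ.sup (mc P r p)) + 1)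
  refine ⟨L, fun j => hL j ?_⟩
  have : mc P r p j ≤ Finset.univ.sup (mc P r p) := Finset.le_sup (Finset.mem_univ j)
  omega

end ClosedAux

/-- Existence of a closed collection of minimal chains: every job `k` has a chain of value
`mc k` all of whose prefixes are minimal chains of their last elements; consequently there
is an assignment `j ↦ L j` of minimal chains that is closed under taking prefixes. -/
theorem exists_closed_collection {n : ℕ}
    (P : Fin n → Finset (Fin n)) (p r : Fin n → ℕ) (hp : ∀ j, 1 ≤ p j)
    (hchain : ∀ k : Fin n, ∃ L : List (Fin n), IsChainTo P k L) :
    (∀ k : Fin n, ∃ L : List (Fin n), IsChainTo P k L ∧ chainValue r p L = mc P r p k ∧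
        ∀ q : ℕ, ∀ hq : q < L.length,
          IsChainTo P (L.get ⟨q, hq⟩) (L.take (q + 1)) ∧
            chainValue r p (L.take (q + 1)) = mc P r p (L.get ⟨q, hq⟩)) ∧
      ∃ L : Fin n → List (Fin n), ∀ j : Fin n,
        IsChainTo P j (L j) ∧ chainValue r p (L j) = mc P r p j ∧
          ∀ i ∈ L j, L i <+: L j := by
  exact ⟨ClosedAux.part1 hp hchain, ClosedAux.part2 hp hchain⟩
end
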